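/- arXiv:math/9909188 — 12 statements merged into one kernel-verified Lean document; each statement's English description precedes it below -/
import Mathlib

section
/- Let m ≥ 1 be an integer and let μ be a shift-invariant probability measure on ({0,1})^ℤ. Write ρ = P(1) for the probability that a given site is occupied. Then Σ_{k=1}^{m−1} k·P(1 0^k 1) + m·P(1 0^m) = 1 − ρ − P(0^{m+1}), where 0^k denotes the word consisting of k zeros. (In particular, in the deterministic Fukui–Ishibashi traffic model with maximum speed m, the average flow at time t equals 1 − ρ − P_t(0^{m+1}).) -/
/-!
Write `p k = P(0^k)`. Splitting cylinders according to one extra symbol on the right, and (by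
shift-invariance) on the left, gives `P(0^k 1) = p k - p (k+1) = P(1 0^k)` and
`P(1 0^k 1) = P(0^k 1) - P(0^(k+1) 1)`. Summation by parts turns the left-hand side into
`∑_{k=1}^m P(0^k 1)`, which telescopes to `p 1 - p (m+1) = 1 - ρ - P(0^(m+1))`.
-/

open MeasureTheory

/-- Probability of the cylinder set determined by the word `w` (read starting at
position `1`, which is irrelevant by shift-invariance). -/
noncomputable def wordProb (μ : Measure (ℤ → Bool)) (w : List Bool) : ℝ :=
  (μ {s | ∀ k : Fin w.length, s ((k : ℕ) : ℤ) = w.get k}).toReal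

def cylSet (w : List Bool) : Set (ℤ → Bool) :=
  {s | ∀ k : Fin w.length, s ((k : ℕ) : ℤ) = w.get k}

lemma wordProb_eq_toReal_cylSet (μ : Measure (ℤ → Bool)) (w : List Bool) :
    wordProb μ w = (μ (cylSet w)).toReal := rfl

lemma measurableSet_cylSet (w : List Bool) : MeasurableSet (cylSet w) := by
  simp only [cylSet, Set.ofPred_forall]
  exact .iInter fun k => measurableSet_eq_fun (measurable_pi_apply _) measurable_const

@[simp]
lemma cylSet_nil : cylSet [] = Set.univ := by
  ext s; simp [cylSet]

lemma mem_cylSet_append_singleton {w : List Bool} {b : Bool} {s : ℤ → Bool} :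
    s ∈ cylSet (w ++ [b]) ↔ s ∈ cylSet w ∧ s w.length = b := by
  constructor
  · intro h
    refine ⟨fun k => ?_, by simpa using h ⟨w.length, by simp⟩⟩
    simpa [List.getElem_append_left k.isLt] using h ⟨k, by simp⟩
  · rintro ⟨hw, hb⟩ ⟨k, hk⟩
    obtain hlt | rfl := Nat.lt_or_eq_of_le (Nat.lt_succ_iff.mp (by simpa using hk))
    · simpa [List.getElem_append_left hlt] using hw ⟨k, hlt⟩
    · simpa using hb

lemma mem_cylSet_cons {b : Bool} {w : List Bool} {s : ℤ → Bool} :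
    s ∈ cylSet (b :: w) ↔ s 0 = b ∧ (fun i => s (i + 1)) ∈ cylSet w := by
  constructor
  · intro h
    exact ⟨by simpa using h ⟨0, by simp⟩, fun k => by simpa using h ⟨k + 1, by simp⟩⟩
  · rintro ⟨h0, hw⟩ ⟨_ | k, hk⟩
    · simpa using h0
    · simpa using hw ⟨k, by simpa using hk⟩

lemma cylSet_eq_union_append (w : List Bool) :
    cylSet w = cylSet (w ++ [false]) ∪ cylSet (w ++ [true]) := by
  ext s
  simp only [Set.mem_union, mem_cylSet_append_singleton]
  cases s w.length <;> simp

lemma cylSet_shift_preimage_eq_union_cons (w : List Bool) :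
    (fun (s : ℤ → Bool) (i : ℤ) => s (i + 1)) ⁻¹' cylSet w
      = cylSet (false :: w) ∪ cylSet (true :: w) := by
  ext s
  simp only [Set.mem_preimage, Set.mem_union, mem_cylSet_cons]
  cases s 0 <;> simp

section

variable (μ : Measure (ℤ → Bool))

lemma wordProb_nil [IsProbabilityMeasure μ] : wordProb μ [] = 1 := by
  simp [wordProb_eq_toReal_cylSet]

lemma wordProb_eq_append_false_add_append_true [IsFiniteMeasure μ] (w : List Bool) :
    wordProb μ w = wordProb μ (w ++ [false]) + wordProb μ (w ++ [true]) := by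
  have hdisj : Disjoint (cylSet (w ++ [false])) (cylSet (w ++ [true])) :=
    Set.disjoint_left.2 fun s h h' => by
      simp only [mem_cylSet_append_singleton] at h h'
      simp [h.2] at h'
  simp only [wordProb_eq_toReal_cylSet]
  rw [cylSet_eq_union_append, measure_union hdisj (measurableSet_cylSet _),
    ENNReal.toReal_add (measure_ne_top _ _) (measure_ne_top _ _)]

lemma wordProb_eq_false_cons_add_true_cons [IsFiniteMeasure μ]
    (hshift : μ.map (fun s (i : ℤ) => s (i + 1)) = μ) (w : List Bool) :
    wordProb μ w = wordProb μ (false :: w) + wordProb μ (true :: w) := by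
  have hmeas : Measurable fun (s : ℤ → Bool) (i : ℤ) => s (i + 1) := by fun_prop
  have hdisj : Disjoint (cylSet (false :: w)) (cylSet (true :: w)) :=
    Set.disjoint_left.2 fun s h h' => by
      simp only [mem_cylSet_cons] at h h'
      simp [h.1] at h'
  simp only [wordProb_eq_toReal_cylSet]
  rw [← hshift, Measure.map_apply hmeas (measurableSet_cylSet _), hshift,
    cylSet_shift_preimage_eq_union_cons, measure_union hdisj (measurableSet_cylSet _),
    ENNReal.toReal_add (measure_ne_top _ _) (measure_ne_top _ _)]

lemma wordProb_zeros_append_true [IsFiniteMeasure μ] (k : ℕ) :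
    wordProb μ (List.replicate k false ++ [true])
      = wordProb μ (List.replicate k false) - wordProb μ (List.replicate (k + 1) false) := by
  rw [wordProb_eq_append_false_add_append_true μ (List.replicate k false),
    ← List.replicate_succ']
  ring

lemma wordProb_true_cons_zeros [IsFiniteMeasure μ]
    (hshift : μ.map (fun s (i : ℤ) => s (i + 1)) = μ) (k : ℕ) :
    wordProb μ (true :: List.replicate k false)
      = wordProb μ (List.replicate k false) - wordProb μ (List.replicate (k + 1) false) := by
  rw [wordProb_eq_false_cons_add_true_cons μ hshift (List.replicate k false),
    ← List.replicate_succ]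
  ring

lemma wordProb_true_cons_zeros_append_true [IsFiniteMeasure μ]
    (hshift : μ.map (fun s (i : ℤ) => s (i + 1)) = μ) (k : ℕ) :
    wordProb μ (true :: (List.replicate k false ++ [true]))
      = wordProb μ (List.replicate k false ++ [true])
        - wordProb μ (List.replicate (k + 1) false ++ [true]) := by
  rw [wordProb_eq_false_cons_add_true_cons μ hshift (List.replicate k false ++ [true]),
    List.replicate_succ, List.cons_append]
  ring

lemma wordProb_false_eq_one_sub [IsProbabilityMeasure μ] :
    wordProb μ [false] = 1 - wordProb μ [true] := by
  rw [← wordProb_nil μ, wordProb_eq_append_false_add_append_true μ [], List.nil_append,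
    List.nil_append]
  ring

end

lemma Finset.sum_Icc_mul_sub_add_mul {R : Type*} [CommRing R] (q : ℕ → R) (m : ℕ) :
    ∑ k ∈ Icc 1 (m - 1), (k : R) * (q k - q (k + 1)) + m * q m = ∑ k ∈ Icc 1 m, q k := by
  induction m with
  | zero => simp
  | succ n ih =>
    rw [Finset.sum_Icc_succ_top (by omega), ← ih]
    rcases n with _ | n
    · simp
    · rw [Nat.add_sub_cancel, Finset.sum_Icc_succ_top (by omega)]
      push_cast
      ring

/-- For any shift-invariant probability measure on `{0,1}^ℤ`,
`Σ_{k=1}^{m-1} k·P(1 0^k 1) + m·P(1 0^m) = 1 − ρ − P(0^{m+1})`,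
where `ρ = P(1)`. -/
theorem flow_eq_one_sub_rho_sub_block (m : ℕ) (hm : 1 ≤ m)
    (μ : Measure (ℤ → Bool)) [IsProbabilityMeasure μ]
    (hshift : μ.map (fun s (i : ℤ) => s (i + 1)) = μ)
    (ρ : ℝ) (hρ : ρ = wordProb μ [true]) :
    (∑ k ∈ Finset.Icc 1 (m - 1),
        (k : ℝ) * wordProb μ ([true] ++ List.replicate k false ++ [true]))
      + (m : ℝ) * wordProb μ ([true] ++ List.replicate m false)
    = 1 - ρ - wordProb μ (List.replicate (m + 1) false) := by
  set p : ℕ → ℝ := fun k => wordProb μ (List.replicate k false)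
  set q : ℕ → ℝ := fun k => wordProb μ (List.replicate k false ++ [true])
  have hq : ∀ k, q k = p k - p (k + 1) := wordProb_zeros_append_true μ
  calc (∑ k ∈ Finset.Icc 1 (m - 1),
          (k : ℝ) * wordProb μ ([true] ++ List.replicate k false ++ [true]))
        + (m : ℝ) * wordProb μ ([true] ++ List.replicate m false)
      = ∑ k ∈ Finset.Icc 1 (m - 1), (k : ℝ) * (q k - q (k + 1)) + m * q m := by
        rw [hq m]
        simp only [List.cons_append, List.nil_append,
          wordProb_true_cons_zeros_append_true μ hshift, wordProb_true_cons_zeros μ hshift]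
        rfl
    _ = ∑ k ∈ Finset.Icc 1 m, -(p (k + 1) - p k) := by
        simp only [Finset.sum_Icc_mul_sub_add_mul, hq, neg_sub]
    _ = 1 - ρ - p (m + 1) := by
        rw [Finset.sum_neg_distrib, Finset.sum_Icc_sub hm]
        simp only [p, List.replicate_one, wordProb_false_eq_one_sub, hρ]
        ring
end

section
/- Let L ≥ 1 be an integer, let m ≥ 1 be an integer, and let s : ℤ/Lℤ → {0,1} be a configuration with at least one occupied site (s(i) = 1 for some i). For each occupied site i, let g(i) = d − 1, where d is the least positive integer with s(i+d) = 1 (the gap ahead of the car at i). Then Σ_{i : s(i)=1} min(g(i), m) = #{i ∈ ℤ/Lℤ : s(i) = 0} − #{i ∈ ℤ/Lℤ : s(i) = s(i+1) = ⋯ = s(i+m) = 0}. (This is the finite-lattice form of the identity: total flow = number of empty sites minus number of blocks of m+1 consecutive zeros.) -/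
/-!
Every empty site lies in the gap of exactly one car, namely the nearest car behind it, and the
empty sites in the gap of a car with gap `g` sit at distances `1, …, g` ahead of it. So there are
`∑ g i` empty sites. An empty site starts a block of `m + 1` empty sites exactly when it lies at
distance `1, …, g - m` ahead of its car, so there are `∑ (g i - m)` blocks, and
`min g m = g - (g - m)` in truncated subtraction.
-/

open scoped Classical
open Finset

section Gap

variable {R : Type*} [AddGroupWithOne R]

/-- `g i` is the gap ahead of every car `i` of the configuration `s`. -/
def IsGapFn (s : R → Bool) (g : R → ℕ) : Prop :=
  ∀ i, s i = true →
    s (i + ((g i + 1 : ℕ) : R)) = true ∧ ∀ d : ℕ, 0 < d → d ≤ g i → s (i + (d : R)) = false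

def AheadWithin (s : R → Bool) (t : R → ℕ) (j : R) : Prop :=
  ∃ i, s i = true ∧ ∃ d : ℕ, 1 ≤ d ∧ d ≤ t i ∧ j = i + (d : R)

variable {s : R → Bool} {g : R → ℕ}

theorem IsGapFn.eq_of_add_eq_of_le (hg : IsGapFn s g) {i i' : R} (hi : s i = true)
    (hi' : s i' = true) {d d' : ℕ} (hd : d ≤ g i) (hd' : 1 ≤ d') (hle : d' ≤ d)
    (heq : i + (d : R) = i' + (d' : R)) : d = d' := by
  by_contra hne
  have hcar : i + ((d - d' : ℕ) : R) = i' := by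
    rw [← Nat.sub_add_cancel hle, Nat.cast_add, ← add_assoc] at heq
    exact add_right_cancel heq
  have := (hg i hi).2 (d - d') (by omega) (by omega)
  rw [hcar, hi'] at this
  exact Bool.noConfusion this

theorem IsGapFn.eq_of_add_eq (hg : IsGapFn s g) {i i' : R} (hi : s i = true)
    (hi' : s i' = true) {d d' : ℕ} (hd₁ : 1 ≤ d) (hd : d ≤ g i) (hd₁' : 1 ≤ d') (hd' : d' ≤ g i')
    (heq : i + (d : R) = i' + (d' : R)) : i = i' ∧ d = d' := by
  have hdd : d = d' := by
    rcases le_total d' d with hle | hle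
    · exact hg.eq_of_add_eq_of_le hi hi' hd hd₁' hle heq
    · exact (hg.eq_of_add_eq_of_le hi' hi hd' hd₁ hle heq.symm).symm
  subst hdd
  exact ⟨add_right_cancel heq, rfl⟩

end Gap

section Cyclic

variable {L : ℕ} [NeZero L] {s : ZMod L → Bool} {g : ZMod L → ℕ}

theorem IsGapFn.card_aheadWithin (hg : IsGapFn s g) {t : ZMod L → ℕ}
    (ht : ∀ i, s i = true → t i ≤ g i) :
    #(univ.filter (AheadWithin s t)) = ∑ i ∈ univ.filter (fun i => s i = true), t i := by
  calc #(univ.filter (AheadWithin s t))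
      = #((univ.filter (fun i => s i = true)).sigma fun i => Icc 1 (t i)) := by
        symm
        refine card_bij (fun p _ => p.1 + (p.2 : ZMod L)) ?_ ?_ ?_
        · rintro ⟨i, d⟩ hp
          simp only [mem_sigma, mem_filter, mem_univ, true_and, mem_Icc] at hp
          simpa using ⟨i, hp.1, d, hp.2.1, hp.2.2, rfl⟩
        · rintro ⟨i, d⟩ hp ⟨i', d'⟩ hp' heq
          simp only [mem_sigma, mem_filter, mem_univ, true_and, mem_Icc] at hp hp'
          obtain ⟨rfl, rfl⟩ := hg.eq_of_add_eq hp.1 hp'.1 hp.2.1 (hp.2.2.trans (ht i hp.1))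
            hp'.2.1 (hp'.2.2.trans (ht i' hp'.1)) heq
          rfl
        · intro j hj
          obtain ⟨i, hi, d, hd₁, hd, rfl⟩ := (mem_filter.1 hj).2
          exact ⟨⟨i, d⟩, by simpa using ⟨hi, hd₁, hd⟩, rfl⟩
    _ = ∑ i ∈ univ.filter (fun i => s i = true), t i := by simp [card_sigma]

/-- The nearest car behind an empty site `j` is the car whose gap contains `j`. -/
theorem IsGapFn.aheadWithin_of_eq_false (hg : IsGapFn s g) (hex : ∃ i, s i = true) {j : ZMod L}
    (hj : s j = false) : AheadWithin s g j := by
  have hbehind : ∃ k : ℕ, s (j - (k : ZMod L)) = true := by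
    obtain ⟨i₀, hi₀⟩ := hex
    exact ⟨(j - i₀).val, by simpa using hi₀⟩
  set k := Nat.find hbehind
  have hk : s (j - (k : ZMod L)) = true := Nat.find_spec hbehind
  have hk₁ : 1 ≤ k := Nat.one_le_iff_ne_zero.2 fun h => by simp [h, hj] at hk
  refine ⟨j - k, hk, k, hk₁, ?_, by ring⟩
  by_contra! hgk
  refine Nat.find_min hbehind (m := k - (g (j - k) + 1)) (by omega) ?_
  convert (hg _ hk).1 using 2
  rw [Nat.cast_sub (by omega)]
  ring

theorem IsGapFn.eq_false_iff (hg : IsGapFn s g) (hex : ∃ i, s i = true) (j : ZMod L) :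
    s j = false ↔ AheadWithin s g j := by
  refine ⟨hg.aheadWithin_of_eq_false hex, ?_⟩
  rintro ⟨i, hi, d, hd₁, hd, rfl⟩
  exact (hg i hi).2 d hd₁ hd

theorem IsGapFn.zeroBlock_iff (hg : IsGapFn s g) (hex : ∃ i, s i = true) (m : ℕ) (j : ZMod L) :
    (∀ r : ℕ, r ≤ m → s (j + (r : ZMod L)) = false) ↔ AheadWithin s (fun i => g i - m) j := by
  constructor
  · intro hblock
    obtain ⟨i, hi, d, hd₁, hd, rfl⟩ := hg.aheadWithin_of_eq_false hex (by simpa using hblock 0)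
    refine ⟨i, hi, d, hd₁, ?_, rfl⟩
    by_contra! hdm
    -- the car ahead of `i` lies within the block
    have := hblock (g i + 1 - d) (by omega)
    rw [add_assoc, ← Nat.cast_add, Nat.add_sub_cancel' (by omega), (hg i hi).1] at this
    exact Bool.noConfusion this
  · rintro ⟨i, hi, d, hd₁, hd, rfl⟩ r hr
    dsimp only at hd
    rw [add_assoc, ← Nat.cast_add]
    exact (hg i hi).2 (d + r) (by omega) (by omega)

end Cyclic

theorem totalFlow_eq_zeros_sub_blocks_general (L m : ℕ) [NeZero L]
    (s : ZMod L → Bool) (hex : ∃ i, s i = true)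
    (g : ZMod L → ℕ)
    (hg : ∀ i, s i = true →
      s (i + ((g i + 1 : ℕ) : ZMod L)) = true ∧
      ∀ d : ℕ, 0 < d → d ≤ g i → s (i + (d : ZMod L)) = false) :
    (∑ i ∈ Finset.univ.filter (fun i => s i = true), (min (g i) m : ℤ))
      = ((Finset.univ.filter (fun i => s i = false)).card : ℤ)
        - ((Finset.univ.filter
            (fun i => ∀ r : ℕ, r ≤ m → s (i + (r : ZMod L)) = false)).card : ℤ) := by
  have hg : IsGapFn s g := hg
  have hzeros : #(univ.filter fun j => s j = false) = ∑ i ∈ univ.filter (fun i => s i = true), g i := by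
    rw [filter_congr fun j _ => hg.eq_false_iff hex j]
    exact hg.card_aheadWithin fun _ _ => le_rfl
  have hblocks : #(univ.filter fun j => ∀ r : ℕ, r ≤ m → s (j + (r : ZMod L)) = false)
      = ∑ i ∈ univ.filter (fun i => s i = true), (g i - m) := by
    rw [filter_congr fun j _ => hg.zeroBlock_iff hex m j]
    exact hg.card_aheadWithin fun _ _ => Nat.sub_le _ _
  rw [hzeros, hblocks, Nat.cast_sum, Nat.cast_sum, ← sum_sub_distrib]
  refine sum_congr rfl fun i _ => ?_
  omega

/-- On a cyclic lattice of `L ≥ 1` sites with at least one car, the total flow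
`Σ min(g(i), m)` over occupied sites `i` (where `g(i)+1` is the least positive
`d` with site `i+d` occupied) equals the number of empty sites minus the number
of blocks of `m+1` consecutive empty sites. -/
theorem totalFlow_eq_zeros_sub_blocks (L m : ℕ) [NeZero L] (hm : 1 ≤ m)
    (s : ZMod L → Bool) (hex : ∃ i, s i = true)
    (g : ZMod L → ℕ)
    (hg : ∀ i, s i = true →
      s (i + ((g i + 1 : ℕ) : ZMod L)) = true ∧
      ∀ d : ℕ, 0 < d → d ≤ g i → s (i + (d : ZMod L)) = false) :
    (∑ i ∈ Finset.univ.filter (fun i => s i = true), (min (g i) m : ℤ))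
      = ((Finset.univ.filter (fun i => s i = false)).card : ℤ)
        - ((Finset.univ.filter
            (fun i => ∀ r : ℕ, r ≤ m → s (i + (r : ZMod L)) = false)).card : ℤ) :=
  totalFlow_eq_zeros_sub_blocks_general L m s hex g hg
end

section
/- (Proposition 2.) Let m ≥ 1 and n ≥ 0 be integers, let s ∈ ({0,1})^ℤ, and let i ∈ ℤ. Then (F_m^n s)(i+r) = 0 for all r ∈ {0, 1, …, m} if and only if the word s(i−mn) s(i−mn+1) ⋯ s(i+m+n) (which has length (n+1)(m+1)) is m-admissible. In other words, a word a₁a₂…a_p is an n-step preimage of the block 0^{m+1} under F_m if and only if p = (n+1)(m+1) and a₁a₂…a_p is m-admissible. -/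
open scoped Classical

/-- The Fukui–Ishibashi cellular automaton with maximum speed `m` on `{0,1}^ℤ`. -/
noncomputable def fukuiIshibashi (m : ℕ) (s : ℤ → Bool) : ℤ → Bool := fun i =>
  if (s i = true ∧ s (i + 1) = true) ∨
     (s i = false ∧ ∃ j : ℕ, 1 ≤ j ∧ j ≤ m ∧ s (i - (j : ℤ)) = true ∧
        (∀ k : ℕ, 1 ≤ k → k < j → s (i - (k : ℤ)) = false) ∧
        (j = m ∨ s (i + 1) = true))
  then true else false

/-- The contribution of a letter: `0 ↦ +1`, `1 ↦ -m`. -/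
def xiVal (m : ℕ) (b : Bool) : ℤ := if b then -(m : ℤ) else 1

/-- A word over `{0,1}` is `m`-admissible if every nonempty partial sum of the
values `ξ(0)=1`, `ξ(1)=-m` is strictly positive. -/
def mAdmissible (m : ℕ) (w : List Bool) : Prop :=
  ∀ k, 1 ≤ k → k ≤ w.length → 0 < ((w.take k).map (xiVal m)).sum

@[simp] lemma xiVal_true (m : ℕ) : xiVal m true = -(m:ℤ) := by simp [xiVal]
@[simp] lemma xiVal_false (m : ℕ) : xiVal m false = 1 := by simp [xiVal]

def crossP (m : ℕ) (s : ℤ → Bool) (c : ℤ) : Prop :=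
  ∃ p : ℤ, c + 1 - m ≤ p ∧ p ≤ c ∧ s p = true ∧ ∀ x : ℤ, p < x → x ≤ c + 1 → s x = false

noncomputable def chiV (m : ℕ) (s : ℤ → Bool) (c : ℤ) : ℤ := if crossP m s c then 1 else 0

def Ssum (m : ℕ) (s : ℤ → Bool) (α : ℤ) (k : ℕ) : ℤ :=
  ∑ x ∈ Finset.range k, xiVal m (s (α + x))

lemma crossP_iff_nat (m : ℕ) (s : ℤ → Bool) (c : ℤ) :
    crossP m s c ↔ ∃ j : ℕ, 1 ≤ j ∧ j ≤ m ∧ s (c + 1 - (j:ℤ)) = true ∧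
      ∀ k : ℕ, k < j → s (c + 1 - (k:ℤ)) = false := by
  constructor
  · rintro ⟨p, h1, h2, h3, h4⟩
    refine ⟨(c + 1 - p).toNat, by omega, by omega, ?_, ?_⟩
    · rw [show c + 1 - ((c + 1 - p).toNat : ℤ) = p by omega]; exact h3
    · intro k hk
      apply h4 <;> omega
  · rintro ⟨j, h1, h2, h3, h4⟩
    refine ⟨c + 1 - (j:ℤ), by omega, by omega, h3, ?_⟩
    intro x hx1 hx2
    rw [show x = c + 1 - ((c + 1 - x).toNat : ℤ) by omega]
    exact h4 _ (by omega)

lemma crossP_pred_iff_nat (m : ℕ) (s : ℤ → Bool) (c : ℤ) :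
    crossP m s (c - 1) ↔ ∃ j : ℕ, 1 ≤ j ∧ j ≤ m ∧ s (c - (j:ℤ)) = true ∧
      ∀ k : ℕ, k < j → s (c - (k:ℤ)) = false := by
  rw [crossP_iff_nat]
  simp only [show c - 1 + 1 = c from by ring]

lemma local_step (m : ℕ) (hm : 1 ≤ m) (s : ℤ → Bool) (c : ℤ) :
    xiVal m (fukuiIshibashi m s c) =
      xiVal m (s c) + ((m:ℤ)+1) * (chiV m s c - chiV m s (c-1)) := by
  have hmZ : (1:ℤ) ≤ (m:ℤ) := by exact_mod_cast hm
  cases hsc : s c with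
  | true =>
    have hA : ¬ crossP m s (c-1) := by
      rintro ⟨p, h1, h2, h3, h4⟩
      have := h4 c (by omega) (by omega)
      rw [hsc] at this; cases this
    cases hsc1 : s (c+1) with
    | true =>
      have hX : ¬ crossP m s c := by
        rintro ⟨p, h1, h2, h3, h4⟩
        have := h4 (c+1) (by omega) (by omega)
        rw [hsc1] at this; cases this
      have hP : (s c = true ∧ s (c+1) = true) ∨
          (s c = false ∧ ∃ j : ℕ, 1 ≤ j ∧ j ≤ m ∧ s (c - (j : ℤ)) = true ∧
            (∀ k : ℕ, 1 ≤ k → k < j → s (c - (k : ℤ)) = false) ∧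
            (j = m ∨ s (c + 1) = true)) := Or.inl ⟨hsc, hsc1⟩
      simp only [fukuiIshibashi]; rw [if_pos hP]
      simp [chiV, hX, hA, hsc]
    | false =>
      have hX : crossP m s c := by
        refine ⟨c, by omega, le_refl c, hsc, ?_⟩
        intro x hx1 hx2
        rw [show x = c + 1 by omega]; exact hsc1
      have hP : ¬ ((s c = true ∧ s (c+1) = true) ∨
          (s c = false ∧ ∃ j : ℕ, 1 ≤ j ∧ j ≤ m ∧ s (c - (j : ℤ)) = true ∧
            (∀ k : ℕ, 1 ≤ k → k < j → s (c - (k : ℤ)) = false) ∧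
            (j = m ∨ s (c + 1) = true))) := by
        rintro (⟨_, h2⟩ | ⟨h1, _⟩)
        · rw [hsc1] at h2; cases h2
        · rw [hsc] at h1; cases h1
      simp only [fukuiIshibashi]; rw [if_neg hP]
      simp only [chiV, if_pos hX, if_neg hA, xiVal_true, xiVal_false, hsc]
      ring
  | false =>
    by_cases hA : crossP m s (c-1)
    · obtain ⟨j0, hj01, hj0m, hj0s, hj0z⟩ := (crossP_pred_iff_nat m s c).mp hA
      by_cases hcm : (j0 = m ∨ s (c+1) = true)
      · have hP : (s c = true ∧ s (c+1) = true) ∨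
            (s c = false ∧ ∃ j : ℕ, 1 ≤ j ∧ j ≤ m ∧ s (c - (j : ℤ)) = true ∧
              (∀ k : ℕ, 1 ≤ k → k < j → s (c - (k : ℤ)) = false) ∧
              (j = m ∨ s (c + 1) = true)) :=
          Or.inr ⟨hsc, j0, hj01, hj0m, hj0s, fun k _ hk2 => hj0z k hk2, hcm⟩
        have hX : ¬ crossP m s c := by
          intro hcr
          obtain ⟨j1, hj11, hj1m, hj1s, hj1z⟩ := (crossP_iff_nat m s c).mp hcr
          have hc1 : s (c+1) = false := by
            have := hj1z 0 (by omega); simpa using this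
          have hj0m' : j0 = m := by
            rcases hcm with h | h
            · exact h
            · rw [h] at hc1; cases hc1
          rcases Nat.lt_or_ge j1 2 with h2 | h2
          · have hj1e : j1 = 1 := by omega
            rw [hj1e] at hj1s
            rw [show c + 1 - ((1:ℕ):ℤ) = c by push_cast; ring] at hj1s
            rw [hsc] at hj1s; cases hj1s
          · have hk := hj0z (j1 - 1) (by omega)
            rw [show c - ((j1 - 1 : ℕ) : ℤ) = c + 1 - (j1:ℤ) by omega] at hk
            rw [hj1s] at hk; cases hk
        simp only [fukuiIshibashi]; rw [if_pos hP]
        simp only [chiV, if_neg hX, if_pos hA, xiVal_true, xiVal_false, hsc]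
        ring
      · push_neg at hcm
        obtain ⟨hj0ne, hc1'⟩ := hcm
        have hc1 : s (c+1) = false := by simpa using hc1'
        have hX : crossP m s c := by
          rw [crossP_iff_nat]
          refine ⟨j0 + 1, by omega, by omega, ?_, ?_⟩
          · rw [show c + 1 - ((j0+1 : ℕ):ℤ) = c - (j0:ℤ) by push_cast; ring]
            exact hj0s
          · intro k hk
            rcases Nat.eq_zero_or_pos k with hk0 | hk1
            · subst hk0; simpa using hc1
            · rw [show c + 1 - (k:ℤ) = c - ((k-1 : ℕ):ℤ) by omega]
              exact hj0z (k-1) (by omega)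
        have hP : ¬ ((s c = true ∧ s (c+1) = true) ∨
            (s c = false ∧ ∃ j : ℕ, 1 ≤ j ∧ j ≤ m ∧ s (c - (j : ℤ)) = true ∧
              (∀ k : ℕ, 1 ≤ k → k < j → s (c - (k : ℤ)) = false) ∧
              (j = m ∨ s (c + 1) = true))) := by
          rintro (⟨h1, _⟩ | ⟨_, j, hj1, hjm, hjs, hjz, hdisj⟩)
          · rw [hsc] at h1; cases h1
          · have hjj0 : j = j0 := by
              by_contra hne
              rcases Nat.lt_or_ge j j0 with h | h
              · have := hj0z j h; rw [hjs] at this; cases this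
              · have hlt : j0 < j := by omega
                have := hjz j0 hj01 hlt; rw [hj0s] at this; cases this
            subst hjj0
            rcases hdisj with h | h
            · exact hj0ne h
            · rw [hc1] at h; cases h
        simp only [fukuiIshibashi]; rw [if_neg hP]
        simp only [chiV, if_pos hX, if_pos hA, xiVal_true, xiVal_false, hsc]
        ring
    · have hX : ¬ crossP m s c := by
        rintro ⟨p, h1, h2, h3, h4⟩
        rcases eq_or_lt_of_le h2 with he | hlt
        · rw [he] at h3; rw [hsc] at h3; cases h3
        · exact hA ⟨p, by omega, by omega, h3, fun x hx1 hx2 => h4 x hx1 (by omega)⟩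
      have hP : ¬ ((s c = true ∧ s (c+1) = true) ∨
          (s c = false ∧ ∃ j : ℕ, 1 ≤ j ∧ j ≤ m ∧ s (c - (j : ℤ)) = true ∧
            (∀ k : ℕ, 1 ≤ k → k < j → s (c - (k : ℤ)) = false) ∧
            (j = m ∨ s (c + 1) = true))) := by
        rintro (⟨h1, _⟩ | ⟨_, j, hj1, hjm, hjs, hjz, _⟩)
        · rw [hsc] at h1; cases h1
        · apply hA
          rw [crossP_pred_iff_nat]
          refine ⟨j, hj1, hjm, hjs, fun k hk => ?_⟩
          rcases Nat.eq_zero_or_pos k with h0 | h0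
          · subst h0; simpa using hsc
          · exact hjz k h0 hk
      simp only [fukuiIshibashi]; rw [if_neg hP]
      simp only [chiV, if_neg hX, if_neg hA, xiVal_true, xiVal_false, hsc]
      ring
lemma Ssum_succ (m : ℕ) (s : ℤ → Bool) (α : ℤ) (k : ℕ) :
    Ssum m s α (k+1) = Ssum m s α k + xiVal m (s (α + (k:ℤ))) :=
  Finset.sum_range_succ _ _

lemma Ssum_add (m : ℕ) (s : ℤ → Bool) (α : ℤ) (p q : ℕ) :
    Ssum m s α (p + q) = Ssum m s α p + Ssum m s (α + (p:ℤ)) q := by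
  rw [Ssum, Ssum, Ssum, Finset.sum_range_add]
  congr 1
  apply Finset.sum_congr rfl
  intro x _
  rw [show α + ((p + x : ℕ):ℤ) = (α + (p:ℤ)) + (x:ℤ) by push_cast; ring]

lemma Tsum_eq (m : ℕ) (hm : 1 ≤ m) (s : ℤ → Bool) (β : ℤ) (k : ℕ) :
    Ssum m (fukuiIshibashi m s) β k =
      Ssum m s β k + ((m:ℤ)+1) * (chiV m s (β + (k:ℤ) - 1) - chiV m s (β - 1)) := by
  induction k with
  | zero => simp [Ssum]
  | succ k ih =>
    rw [Ssum_succ, Ssum_succ, ih, local_step m hm s (β + (k:ℤ))]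
    rw [show β + ((k+1 : ℕ):ℤ) - 1 = β + (k:ℤ) by push_cast; ring]
    rw [show β + (k:ℤ) - 1 = β + (k:ℤ) - 1 from rfl]
    ring

lemma Ssum_le (m : ℕ) (s : ℤ → Bool) (α : ℤ) (k : ℕ) : Ssum m s α k ≤ (k:ℤ) := by
  have h : ∀ x ∈ Finset.range k, xiVal m (s (α + (x:ℤ))) ≤ 1 := by
    intro x _
    cases s (α + (x:ℤ)) <;> simp <;> omega
  calc Ssum m s α k ≤ ∑ _x ∈ Finset.range k, (1:ℤ) := Finset.sum_le_sum h
    _ = k := by simp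

lemma Ssum_le_of_true (m : ℕ) (s : ℤ → Bool) (α : ℤ) {d k : ℕ} (hd : d < k)
    (h : s (α + (d:ℤ)) = true) : Ssum m s α k ≤ (k:ℤ) - 1 - m := by
  have hk : (d + 1) + (k - d - 1) = k := by omega
  have e : Ssum m s α ((d + 1) + (k - d - 1)) =
      Ssum m s α d + xiVal m (s (α + (d:ℤ))) + Ssum m s (α + ((d+1:ℕ):ℤ)) (k - d - 1) := by
    rw [Ssum_add, Ssum_succ]
  rw [hk, h, xiVal_true] at e
  have h1 := Ssum_le m s α d
  have h2 := Ssum_le m s (α + ((d+1:ℕ):ℤ)) (k - d - 1)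
  rw [e]
  omega

lemma Ssum_const_false (m : ℕ) (s : ℤ → Bool) (α : ℤ) (k : ℕ)
    (h : ∀ x : ℕ, x < k → s (α + (x:ℤ)) = false) : Ssum m s α k = (k:ℤ) := by
  induction k with
  | zero => simp [Ssum]
  | succ n ih =>
    rw [Ssum_succ, ih (fun x hx => h x (by omega)), h n (by omega), xiVal_false]
    push_cast; ring

lemma zeros_of_pos (m : ℕ) (s : ℤ → Bool) (α : ℤ) (K : ℕ) (hK : K ≤ m + 1)
    (h : ∀ k, 1 ≤ k → k ≤ K → 0 < Ssum m s α k) :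
    ∀ r, r < K → s (α + (r:ℤ)) = false := by
  intro r
  induction r using Nat.strong_induction_on with
  | _ r ih =>
    intro hr
    have hS : Ssum m s α r = (r:ℤ) :=
      Ssum_const_false m s α r (fun x hx => ih x hx (by omega))
    have hpos := h (r+1) (by omega) (by omega)
    rw [Ssum_succ, hS] at hpos
    cases hsr : s (α + (r:ℤ)) with
    | true =>
      rw [hsr, xiVal_true] at hpos
      omega
    | false => rfl
lemma key_id (m : ℕ) (hm : 1 ≤ m) (s : ℤ → Bool) (α : ℤ)
    (hz : ∀ r : ℕ, r < m → s (α + (r:ℤ)) = false) (k : ℕ) :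
    Ssum m (fukuiIshibashi m s) (α + (m:ℤ)) k
      = Ssum m s α (m + k) - (m:ℤ) + ((m:ℤ)+1) * chiV m s (α + (m:ℤ) + (k:ℤ) - 1) := by
  have h1 : Ssum m s α (m + k) = Ssum m s α m + Ssum m s (α + (m:ℤ)) k := Ssum_add m s α m k
  have h2 : Ssum m s α m = (m:ℤ) := Ssum_const_false m s α m hz
  have h3 : chiV m s (α + (m:ℤ) - 1) = 0 := by
    rw [chiV, if_neg]
    rintro ⟨p, hp1, hp2, hp3, _⟩
    have hfa := hz (p - α).toNat (by omega)
    rw [show α + (((p - α).toNat : ℕ) : ℤ) = p by omega, hp3] at hfa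
    cases hfa
  rw [Tsum_eq m hm s (α + (m:ℤ)) k, h1, h2, h3]
  ring
lemma onestep (m L : ℕ) (hm : 1 ≤ m) (hL : m + 1 ≤ L) (s : ℤ → Bool) (α : ℤ) :
    (∀ k, 1 ≤ k → k ≤ L → 0 < Ssum m (fukuiIshibashi m s) (α + (m:ℤ)) k) ↔
    (∀ k, 1 ≤ k → k ≤ L + m + 1 → 0 < Ssum m s α k) := by
  constructor
  · intro hT
    have hz' : ∀ r : ℕ, r ≤ m → s (α + (r:ℤ)) = false := by
      by_contra hcon
      push_neg at hcon
      obtain ⟨r1, hrm, hrs0⟩ := hcon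
      have hrs' : s (α + (r1:ℤ)) = true := by simpa using hrs0
      set P : ℕ → Prop := fun r => s (α + (r:ℤ)) = true with hPdef
      have hr0P : P (Nat.findGreatest P m) := Nat.findGreatest_spec hrm hrs'
      set r0 := Nat.findGreatest P m with hr0def
      have hr0m : r0 ≤ m := Nat.findGreatest_le m
      have hr0s : s (α + (r0:ℤ)) = true := hr0P
      have hgt : ∀ x : ℕ, r0 < x → x ≤ m → s (α + (x:ℤ)) = false := by
        intro x h1 h2
        have hnp : ¬ P x := Nat.findGreatest_is_greatest h1 h2
        simpa [hPdef] using hnp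
      by_cases hgap : ∃ d : ℕ, 1 ≤ d ∧ d ≤ m ∧ s (α + (r0:ℤ) + (d:ℤ)) = true
      · have hdspec := Nat.find_spec hgap
        set d := Nat.find hgap with hddef
        obtain ⟨hd1, hdm, hds⟩ := hdspec
        have hzero_mid : ∀ y : ℕ, 1 ≤ y → y < d → s (α + (r0:ℤ) + (y:ℤ)) = false := by
          intro y h1 h2
          have hnm := Nat.find_min hgap h2
          by_contra hcc
          exact hnm ⟨h1, by omega, by simpa using hcc⟩
        have hrd : m + 1 ≤ r0 + d := by
          by_contra hcc
          push_neg at hcc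
          have := hgt (r0 + d) (by omega) (by omega)
          rw [show α + ((r0 + d : ℕ):ℤ) = α + (r0:ℤ) + (d:ℤ) by push_cast; ring, hds] at this
          cases this
        rcases Nat.lt_or_ge d 2 with hd2 | hd2
        · have hde : d = 1 := by omega
          have hr0e : r0 = m := by omega
          have ht : fukuiIshibashi m s (α + (m:ℤ)) = true := by
            simp only [fukuiIshibashi]
            rw [if_pos]
            left
            constructor
            · rw [show α + (m:ℤ) = α + (r0:ℤ) by rw [hr0e]]; exact hr0s
            · rw [show α + (m:ℤ) + 1 = α + (r0:ℤ) + ((d:ℕ):ℤ) by rw [hr0e, hde]; push_cast; ring]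
              exact hds
          have hT1 := hT 1 le_rfl (by omega)
          have he1 : Ssum m (fukuiIshibashi m s) (α + (m:ℤ)) 1 = -(m:ℤ) := by
            simp [Ssum, Finset.sum_range_one, ht]
          rw [he1] at hT1; omega
        · set q : ℤ := α + (r0:ℤ) + (d:ℤ) - 1 with hqdef
          have hsq : s q = false := by
            have := hzero_mid (d-1) (by omega) (by omega)
            rwa [show α + (r0:ℤ) + ((d-1 : ℕ):ℤ) = q by omega] at this
          have ht : fukuiIshibashi m s q = true := by
            simp only [fukuiIshibashi]
            rw [if_pos]
            right
            refine ⟨hsq, d - 1, by omega, by omega, ?_, ?_, Or.inr ?_⟩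
            · rw [show q - ((d-1:ℕ):ℤ) = α + (r0:ℤ) by omega]; exact hr0s
            · intro k hk1 hk2
              have := hzero_mid (d-1-k) (by omega) (by omega)
              rwa [show α + (r0:ℤ) + ((d-1-k : ℕ):ℤ) = q - (k:ℤ) by omega] at this
            · rw [show q + 1 = α + (r0:ℤ) + (d:ℤ) by omega]; exact hds
          set e : ℕ := r0 + d - 1 - m with hedef
          have hq2 : q = (α + (m:ℤ)) + (e:ℤ) := by omega
          have hTe := hT (e+1) (by omega) (by omega)
          have hle := Ssum_le_of_true m (fukuiIshibashi m s) (α + (m:ℤ)) (d := e) (k := e+1)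
            (by omega) (by rw [← hq2]; exact ht)
          omega
      · push_neg at hgap
        have hzero : ∀ dd : ℕ, 1 ≤ dd → dd ≤ m → s (α + (r0:ℤ) + (dd:ℤ)) = false := by
          intro dd h1 h2
          simpa using hgap dd h1 h2
        set q : ℤ := α + (r0:ℤ) + (m:ℤ) with hqdef
        have hsq : s q = false := by
          have := hzero m hm le_rfl
          rwa [show α + (r0:ℤ) + ((m:ℕ):ℤ) = q by omega] at this
        have ht : fukuiIshibashi m s q = true := by
          simp only [fukuiIshibashi]
          rw [if_pos]
          right
          refine ⟨hsq, m, hm, le_rfl, ?_, ?_, Or.inl rfl⟩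
          · rw [show q - ((m:ℕ):ℤ) = α + (r0:ℤ) by omega]; exact hr0s
          · intro k hk1 hk2
            have := hzero (m - k) (by omega) (by omega)
            rwa [show α + (r0:ℤ) + ((m-k : ℕ):ℤ) = q - (k:ℤ) by omega] at this
        have hq2 : q = (α + (m:ℤ)) + (r0:ℤ) := by omega
        have hTe := hT (r0+1) (by omega) (by omega)
        have hle := Ssum_le_of_true m (fukuiIshibashi m s) (α + (m:ℤ)) (d := r0) (k := r0+1)
          (by omega) (by rw [← hq2]; exact ht)
        omega
    have hz : ∀ r : ℕ, r < m → s (α + (r:ℤ)) = false := fun r hr => hz' r (by omega)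
    have main : ∀ k2 : ℕ, 1 ≤ k2 → k2 ≤ L → 0 < Ssum m s α (m + k2) := by
      intro k2 h1 h2
      have hTk := hT k2 h1 h2
      rw [key_id m hm s α hz k2] at hTk
      by_cases hX : crossP m s (α + (m:ℤ) + (k2:ℤ) - 1)
      · obtain ⟨p, hp1, hp2, hp3, hp4⟩ := hX
        have hpge : α + (m:ℤ) + 1 ≤ p := by
          by_contra hlt
          push_neg at hlt
          have := hz' (p - α).toNat (by omega)
          rw [show α + (((p - α).toNat : ℕ):ℤ) = p by omega, hp3] at this
          cases this
        set k3 : ℕ := (p - α - (m:ℤ)).toNat with hk3def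
        have hk3c : (k3:ℤ) = p - α - (m:ℤ) := by omega
        have hT2 := hT k3 (by omega) (by omega)
        rw [key_id m hm s α hz k3] at hT2
        have hX2 : ¬ crossP m s (α + (m:ℤ) + (k3:ℤ) - 1) := by
          rintro ⟨p2, hq1, hq2, hq3, hq4⟩
          have := hq4 p (by omega) (by omega)
          rw [hp3] at this; cases this
        rw [chiV, if_neg hX2, mul_zero, add_zero] at hT2
        have e1 : Ssum m s α (m + k3 + 1) =
            Ssum m s α (m + k3) + xiVal m (s (α + ((m + k3 : ℕ):ℤ))) := Ssum_succ m s α (m+k3)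
        rw [show α + ((m + k3 : ℕ):ℤ) = p by omega, hp3, xiVal_true] at e1
        have hsplit : Ssum m s α ((m + k3 + 1) + (k2 - k3 - 1)) =
            Ssum m s α (m + k3 + 1) + Ssum m s (α + ((m + k3 + 1 : ℕ):ℤ)) (k2 - k3 - 1) :=
          Ssum_add m s α (m + k3 + 1) (k2 - k3 - 1)
        have hrest : Ssum m s (α + ((m + k3 + 1 : ℕ):ℤ)) (k2 - k3 - 1) = ((k2 - k3 - 1 : ℕ):ℤ) := by
          apply Ssum_const_false
          intro x hx
          apply hp4 <;> omega
        have hco : (m + k3 + 1) + (k2 - k3 - 1) = m + k2 := by omega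
        rw [hco] at hsplit
        rw [hsplit, hrest, e1]
        omega
      · rw [chiV, if_neg hX, mul_zero, add_zero] at hTk
        omega
    intro k hk1 hkL
    rcases le_or_gt k (m+1) with hksmall | hkbig
    · rw [Ssum_const_false m s α k (fun x hx => hz' x (by omega))]
      exact_mod_cast hk1
    · rcases le_or_gt k (L + m) with hkmid | hkend
      · have := main (k - m) (by omega) (by omega)
        rwa [show m + (k - m) = k by omega] at this
      · have hke : k = m + L + 1 := by omega
        have hTL := hT L (by omega) le_rfl
        rw [key_id m hm s α hz L] at hTL
        cases hc1 : s (α + ((m + L : ℕ):ℤ)) with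
        | false =>
          have e1 : Ssum m s α (m + L + 1) =
              Ssum m s α (m + L) + xiVal m (s (α + ((m + L : ℕ):ℤ))) := Ssum_succ m s α (m+L)
          rw [hc1, xiVal_false] at e1
          have hml := main L (by omega) le_rfl
          rw [hke, e1]
          omega
        | true =>
          have hX : ¬ crossP m s (α + (m:ℤ) + (L:ℤ) - 1) := by
            rintro ⟨p, h1, h2, h3, h4⟩
            have := h4 (α + ((m + L : ℕ):ℤ)) (by push_cast; omega) (by push_cast; omega)
            rw [hc1] at this; cases this
          rw [chiV, if_neg hX, mul_zero, add_zero] at hTL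
          have e1 : Ssum m s α (m + L + 1) =
              Ssum m s α (m + L) + xiVal m (s (α + ((m + L : ℕ):ℤ))) := Ssum_succ m s α (m+L)
          rw [hc1, xiVal_true] at e1
          rw [hke, e1]
          omega
  · intro hS k hk1 hkL
    have hz : ∀ r : ℕ, r < m → s (α + (r:ℤ)) = false := fun r hr =>
      zeros_of_pos m s α m (by omega) (fun k h1 h2 => hS k h1 (by omega)) r hr
    rw [key_id m hm s α hz k]
    by_cases hX : crossP m s (α + (m:ℤ) + (k:ℤ) - 1)
    · have hpos := hS (m + k) (by omega) (by omega)
      rw [chiV, if_pos hX]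
      omega
    · rw [chiV, if_neg hX, mul_zero, add_zero]
      cases hc1 : s (α + (m:ℤ) + (k:ℤ)) with
      | true =>
        have e : Ssum m s α (m + k + 1) =
            Ssum m s α (m + k) + xiVal m (s (α + ((m + k : ℕ):ℤ))) := Ssum_succ m s α (m+k)
        rw [show α + ((m + k : ℕ):ℤ) = α + (m:ℤ) + (k:ℤ) by push_cast; ring, hc1, xiVal_true] at e
        have h2 := hS (m+k+1) (by omega) (by omega)
        rw [e] at h2
        omega
      | false =>
        have hzz : ∀ x : ℕ, x ≤ m → s (α + (m:ℤ) + (k:ℤ) - (x:ℤ)) = false := by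
          intro x
          induction x using Nat.strong_induction_on with
          | _ x ih =>
            intro hxm
            cases hsx : s (α + (m:ℤ) + (k:ℤ) - (x:ℤ)) with
            | false => rfl
            | true =>
              exfalso
              rcases Nat.eq_zero_or_pos x with h0 | h0
              · subst h0
                rw [show α + (m:ℤ) + (k:ℤ) - ((0:ℕ):ℤ) = α + (m:ℤ) + (k:ℤ) by push_cast; ring,
                  hc1] at hsx
                cases hsx
              · refine hX ⟨α + (m:ℤ) + (k:ℤ) - (x:ℤ), by omega, by omega, hsx, ?_⟩
                intro y hy1 hy2
                have hnn := ih (α + (m:ℤ) + (k:ℤ) - y).toNat (by omega) (by omega)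
                rwa [show α + (m:ℤ) + (k:ℤ) - (((α + (m:ℤ) + (k:ℤ) - y).toNat : ℕ) : ℤ) = y
                  by omega] at hnn
        have hsplit : Ssum m s α (k + m) = Ssum m s α k + Ssum m s (α + (k:ℤ)) m :=
          Ssum_add m s α k m
        have htail : Ssum m s (α + (k:ℤ)) m = (m:ℤ) := by
          apply Ssum_const_false
          intro x hx
          have := hzz (m - x) (by omega)
          rwa [show α + (m:ℤ) + (k:ℤ) - ((m - x : ℕ):ℤ) = α + (k:ℤ) + (x:ℤ) by omega] at this
        have hSk := hS k (by omega) (by omega)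
        rw [show m + k = k + m from Nat.add_comm m k, hsplit, htail]
        omega

lemma main_ind (m : ℕ) (hm : 1 ≤ m) :
    ∀ (n : ℕ) (s : ℤ → Bool) (i : ℤ),
      (∀ r : ℕ, r ≤ m → (fukuiIshibashi m)^[n] s (i + (r:ℤ)) = false) ↔
      (∀ k, 1 ≤ k → k ≤ (n+1)*(m+1) → 0 < Ssum m s (i - (m:ℤ)*(n:ℤ)) k) := by
  intro n
  induction n with
  | zero =>
    intro s i
    simp only [Function.iterate_zero, id_eq, Nat.cast_zero, mul_zero, sub_zero, zero_add, one_mul]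
    constructor
    · intro h k h1 h2
      rw [Ssum_const_false m s i k (fun x hx => h x (by omega))]
      exact_mod_cast h1
    · intro h r hr
      exact zeros_of_pos m s i (m+1) le_rfl h r (by omega)
  | succ n ih =>
    intro s i
    simp only [Function.iterate_succ_apply]
    rw [ih (fukuiIshibashi m s) i]
    have hstep := onestep m ((n+1)*(m+1)) hm
      (Nat.le_mul_of_pos_left (m+1) (by omega)) s (i - (m:ℤ)*((n:ℤ)+1))
    rw [show (i - (m:ℤ)*((n:ℤ)+1)) + (m:ℤ) = i - (m:ℤ)*(n:ℤ) by ring] at hstep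
    rw [show (n+1)*(m+1) + m + 1 = (n+1+1)*(m+1) by ring] at hstep
    rw [hstep]
    rw [show i - (m:ℤ)*(((n+1 : ℕ)):ℤ) = i - (m:ℤ)*((n:ℤ)+1) by push_cast; ring]

lemma list_sum_eq (m : ℕ) (f : ℕ → Bool) (k : ℕ) :
    (((List.range k).map f).map (xiVal m)).sum = ∑ x ∈ Finset.range k, xiVal m (f x) := by
  induction k with
  | zero => simp
  | succ n ih =>
    rw [List.range_succ]
    simp only [List.map_append, List.map_map, List.sum_append, Finset.sum_range_succ]
    simp only [List.map_map] at ih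
    rw [ih]
    simp

lemma mAdmissible_iff (m : ℕ) (f : ℕ → Bool) (N : ℕ) :
    mAdmissible m ((List.range N).map f) ↔
      ∀ k, 1 ≤ k → k ≤ N → 0 < ∑ x ∈ Finset.range k, xiVal m (f x) := by
  unfold mAdmissible
  simp only [List.length_map, List.length_range]
  have e : ∀ k, k ≤ N → (((List.range N).map f).take k).map (xiVal m) =
      ((List.range k).map f).map (xiVal m) := by
    intro k hk
    rw [← List.map_take, List.take_range, min_eq_left hk]
  constructor
  · intro h k h1 h2
    have := h k h1 h2
    rwa [e k h2, list_sum_eq] at this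
  · intro h k h1 h2
    rw [e k h2, list_sum_eq]
    exact h k h1 h2


/-- Proposition 2: the block `0^{m+1}` occurs at position `i` after `n` steps of
the Fukui–Ishibashi automaton iff the word `s(i-mn) ⋯ s(i+m+n)` (of length
`(n+1)(m+1)`) is `m`-admissible. -/
theorem preimage_iff_mAdmissible (m n : ℕ) (hm : 1 ≤ m) (s : ℤ → Bool) (i : ℤ) :
    (∀ r : ℕ, r ≤ m → (fukuiIshibashi m)^[n] s (i + (r : ℤ)) = false) ↔
    mAdmissible m ((List.range ((n + 1) * (m + 1))).map
      (fun k : ℕ => s (i - (m : ℤ) * (n : ℤ) + (k : ℤ)))) := by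
  rw [main_ind m hm n s i, mAdmissible_iff]
  exact Iff.rfl
end

section
/- (Lemma.) Let m ≥ 1, let s ∈ ({0,1})^ℤ, let a ∈ ℤ and let p ≥ m+1. If the word s(a) s(a+1) ⋯ s(a+p−1) is m-admissible, then the word (F_m s)(a+m) (F_m s)(a+m+1) ⋯ (F_m s)(a+p−2) (of length p − m − 1) is also m-admissible. -/
open scoped Classical

/-- `x` is the source of the car at `i` in `F_m s`. -/
def Src (m : ℕ) (s : ℤ → Bool) (i x : ℤ) : Prop :=
  s x = true ∧ x ≤ i ∧ i ≤ x + m ∧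
    (∀ y, x < y → y ≤ i → s y = false) ∧ (x + (m : ℤ) = i ∨ s (i + 1) = true)

lemma exists_src {m : ℕ} {s : ℤ → Bool} {i : ℤ}
    (h : fukuiIshibashi m s i = true) : ∃ x, Src m s i x := by
  unfold fukuiIshibashi at h
  split at h
  · rename_i hc
    rcases hc with ⟨h1, h2⟩ | ⟨h0, j, hj1, hjm, hx, hbet, hlast⟩
    · exact ⟨i, h1, le_refl _, by omega,
        fun y hy1 hy2 => absurd (lt_of_lt_of_le hy1 hy2) (lt_irrefl _), Or.inr h2⟩
    · refine ⟨i - j, hx, by omega, by omega, ?_, ?_⟩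
      · intro y hy1 hy2
        rcases eq_or_lt_of_le hy2 with rfl | hy2'
        · exact h0
        · have hk : ∃ k : ℕ, (k : ℤ) = i - y ∧ 1 ≤ k ∧ k < j := by
            refine ⟨(i - y).toNat, by omega, by omega, by omega⟩
          obtain ⟨k, hk1, hk2, hk3⟩ := hk
          have := hbet k hk2 hk3
          rwa [show i - (k : ℤ) = y by omega] at this
      · rcases hlast with rfl | h'
        · left; omega
        · exact Or.inr h'
  · exact absurd h (by simp)

lemma src_lt_false {m : ℕ} {s : ℤ → Bool} {i i' x : ℤ}
    (h : Src m s i x) (h' : Src m s i' x) (hlt : i < i') : False := by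
  have hfalse : s (i + 1) = false := h'.2.2.2.1 (i + 1) (by have := h.2.1; omega) (by omega)
  rcases h.2.2.2.2 with hxm | hst
  · have := h'.2.2.1
    omega
  · rw [hst] at hfalse; cases hfalse

lemma src_inj {m : ℕ} {s : ℤ → Bool} {i i' x : ℤ}
    (h : Src m s i x) (h' : Src m s i' x) : i = i' := by
  rcases lt_trichotomy i i' with hlt | he | hlt
  · exact (src_lt_false h h' hlt).elim
  · exact he
  · exact (src_lt_false h' h hlt).elim

noncomputable def srcFI (m : ℕ) (s : ℤ → Bool) (i : ℤ) : ℤ :=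
  if h : fukuiIshibashi m s i = true then (exists_src h).choose else 0

lemma srcFI_spec {m : ℕ} {s : ℤ → Bool} {i : ℤ}
    (h : fukuiIshibashi m s i = true) : Src m s i (srcFI m s i) := by
  rw [srcFI, dif_pos h]; exact (exists_src h).choose_spec

lemma sum_xi (m L : ℕ) (f : ℕ → Bool) :
    (((List.range L).map f).map (xiVal m)).sum
      = (L : ℤ) - ((m : ℤ) + 1) * ((Finset.range L).filter (fun i => f i = true)).card := by
  induction L with
  | zero => simp
  | succ n ih =>
    rw [List.range_succ, List.map_append, List.map_append, List.sum_append,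
      Finset.range_add_one, Finset.filter_insert]
    by_cases hb : f n = true
    · rw [if_pos hb, Finset.card_insert_of_notMem (by simp)]
      simp only [List.map_cons, List.map_nil, List.sum_cons, List.sum_nil, ih, xiVal, hb,
        if_true]
      push_cast; ring
    · rw [if_neg hb]
      simp only [List.map_cons, List.map_nil, List.sum_cons, List.sum_nil, ih, xiVal,
        hb, if_false]
      push_cast; ring

lemma take_range_map {α : Type*} (f : ℕ → α) {k n : ℕ} (hk : k ≤ n) :
    ((List.range n).map f).take k = (List.range k).map f := by
  rw [← List.map_take, List.take_range, min_eq_left hk]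

/-- Lemma: if `s(a) ⋯ s(a+p-1)` is `m`-admissible (`p ≥ m+1`), then the word
`(F_m s)(a+m) ⋯ (F_m s)(a+p-2)` of length `p-m-1` is `m`-admissible too. -/
theorem mAdmissible_step (m : ℕ) (hm : 1 ≤ m) (s : ℤ → Bool) (a : ℤ)
    (p : ℕ) (hp : m + 1 ≤ p)
    (h : mAdmissible m ((List.range p).map (fun k : ℕ => s (a + (k : ℤ))))) :
    mAdmissible m ((List.range (p - m - 1)).map
      (fun k : ℕ => fukuiIshibashi m s (a + (m : ℤ) + (k : ℤ)))) := by
  -- the hypothesis, in counting form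
  have hA : ∀ L : ℕ, 1 ≤ L → L ≤ p →
      ((m : ℤ) + 1) * ((Finset.range L).filter
        (fun j : ℕ => s (a + (j : ℤ)) = true)).card < (L : ℤ) := by
    intro L h1 h2
    have := h L h1 (by simpa using h2)
    rw [take_range_map _ h2, sum_xi] at this
    linarith
  intro k hk1 hk2
  rw [List.length_map, List.length_range] at hk2
  rw [take_range_map _ hk2, sum_xi]
  set T := (Finset.range k).filter
    (fun i : ℕ => fukuiIshibashi m s (a + (m : ℤ) + (i : ℤ)) = true) with hT
  suffices hgoal : ((m : ℤ) + 1) * T.card < (k : ℤ) by linarith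
  rcases T.eq_empty_or_nonempty with he | hne
  · rw [he]; simp; exact_mod_cast hk1
  -- the rightmost car in the window
  have hmax : ∀ i ∈ T, i ≤ T.max' hne := fun i hi => T.le_max' i hi
  set i₀ := T.max' hne with hi₀def
  have hi₀mem : i₀ ∈ T := T.max'_mem hne
  have hi₀k : i₀ < k := by
    have := (Finset.mem_filter.mp hi₀mem).1; exact Finset.mem_range.mp this
  have ht₀ : fukuiIshibashi m s (a + (m : ℤ) + (i₀ : ℤ)) = true :=
    (Finset.mem_filter.mp hi₀mem).2
  have hx₀ := srcFI_spec ht₀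
  set x₀ := srcFI m s (a + (m : ℤ) + (i₀ : ℤ)) with hx₀def
  -- facts about sources
  have key : ∀ i ∈ T, Src m s (a + (m : ℤ) + (i : ℤ))
      (srcFI m s (a + (m : ℤ) + (i : ℤ))) := by
    intro i hi
    exact srcFI_spec (Finset.mem_filter.mp hi).2
  have hlow : ∀ i ∈ T, a + (i : ℤ) ≤ srcFI m s (a + (m : ℤ) + (i : ℤ)) := by
    intro i hi
    have := (key i hi).2.2.1
    omega
  have hhigh : ∀ i ∈ T, srcFI m s (a + (m : ℤ) + (i : ℤ)) ≤ a + (m : ℤ) + (i : ℤ) := by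
    intro i hi; exact (key i hi).2.1
  set g : ℕ → ℕ := fun i => (srcFI m s (a + (m : ℤ) + (i : ℤ)) - a).toNat with hg
  have hgval : ∀ i ∈ T, a + ((g i : ℕ) : ℤ) = srcFI m s (a + (m : ℤ) + (i : ℤ)) := by
    intro i hi
    have := hlow i hi
    simp only [hg]
    omega
  have hginj : Set.InjOn g T := by
    intro i hi j hj hgij
    have h1 := hgval i hi
    have h2 := hgval j hj
    rw [hgij] at h1
    have hxx : srcFI m s (a + (m : ℤ) + (i : ℤ)) = srcFI m s (a + (m : ℤ) + (j : ℤ)) := by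
      omega
    have := src_inj (key i hi) (hxx ▸ key j hj)
    omega
  rcases hx₀.2.2.2.2 with hcase | hcase
  · -- Case A : the rightmost car moved exactly m steps
    set S := (Finset.range (i₀ + 1)).filter (fun j : ℕ => s (a + (j : ℤ)) = true) with hS
    have hmaps : ∀ i ∈ T, g i ∈ S := by
      intro i hi
      have hsrc := key i hi
      have hle : srcFI m s (a + (m : ℤ) + (i : ℤ)) ≤ x₀ := by
        by_contra hgt
        push_neg at hgt
        have hup : srcFI m s (a + (m : ℤ) + (i : ℤ)) ≤ a + (m : ℤ) + (i₀ : ℤ) := by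
          have h1 := hhigh i hi
          have h2 := hmax i hi
          have : (i : ℤ) ≤ (i₀ : ℤ) := by exact_mod_cast h2
          omega
        have := hx₀.2.2.2.1 _ hgt hup
        rw [hsrc.1] at this
        cases this
      have hgv := hgval i hi
      refine Finset.mem_filter.mpr ⟨Finset.mem_range.mpr ?_, ?_⟩
      · omega
      · rw [hgv]; exact hsrc.1
    have hcard : T.card ≤ S.card := Finset.card_le_card_of_injOn g hmaps hginj
    have hAi := hA (i₀ + 1) (by omega) (by omega)
    have hSc : ((m : ℤ) + 1) * T.card ≤ ((m : ℤ) + 1) * S.card := by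
      have : (T.card : ℤ) ≤ (S.card : ℤ) := by exact_mod_cast hcard
      have hnn : (0 : ℤ) ≤ (m : ℤ) + 1 := by positivity
      exact mul_le_mul_of_nonneg_left this hnn
    have : ((i₀ : ℤ) + 1) ≤ (k : ℤ) := by exact_mod_cast hi₀k
    rw [← hS] at hAi
    push_cast at hAi
    linarith
  · -- Case B : the cell in front of the rightmost car is occupied
    set j₁ := m + i₀ + 1 with hj₁
    set S := (Finset.range (m + i₀ + 2)).filter (fun j : ℕ => s (a + (j : ℤ)) = true) with hS
    have hj₁mem : j₁ ∈ S := by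
      refine Finset.mem_filter.mpr ⟨Finset.mem_range.mpr (by omega), ?_⟩
      have : a + ((j₁ : ℕ) : ℤ) = a + (m : ℤ) + (i₀ : ℤ) + 1 := by push_cast; omega
      rw [this]; exact hcase
    have hmaps : ∀ i ∈ T, g i ∈ S.erase j₁ := by
      intro i hi
      have hsrc := key i hi
      have hgv := hgval i hi
      have hup : srcFI m s (a + (m : ℤ) + (i : ℤ)) ≤ a + (m : ℤ) + (i₀ : ℤ) := by
        have h1 := hhigh i hi
        have h2 := hmax i hi
        have : (i : ℤ) ≤ (i₀ : ℤ) := by exact_mod_cast h2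
        omega
      refine Finset.mem_erase.mpr ⟨by omega, Finset.mem_filter.mpr
        ⟨Finset.mem_range.mpr (by omega), ?_⟩⟩
      rw [hgv]; exact hsrc.1
    have hcard : T.card ≤ (S.erase j₁).card := Finset.card_le_card_of_injOn g hmaps hginj
    have hcard' : T.card + 1 ≤ S.card := by
      rw [Finset.card_erase_of_mem hj₁mem] at hcard
      have : 1 ≤ S.card := Finset.card_pos.mpr ⟨j₁, hj₁mem⟩
      omega
    have hAi := hA (m + i₀ + 2) (by omega) (by omega)
    have hSc : ((m : ℤ) + 1) * (T.card + 1) ≤ ((m : ℤ) + 1) * S.card := by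
      have : ((T.card : ℤ) + 1) ≤ (S.card : ℤ) := by exact_mod_cast hcard'
      have hnn : (0 : ℤ) ≤ (m : ℤ) + 1 := by positivity
      exact mul_le_mul_of_nonneg_left this hnn
    have hik : ((i₀ : ℤ) + 1) ≤ (k : ℤ) := by exact_mod_cast hi₀k
    rw [← hS] at hAi
    push_cast at hAi
    linarith
end

section
/- Let m ≥ 1, let s ∈ ({0,1})^ℤ and let a ∈ ℤ be such that s(a) = s(a+1) = ⋯ = s(a+m) = 0. Then for every integer k ≥ m: Σ_{i=a}^{a+k} s(i) = Σ_{i=a+m}^{a+k} (F_m s)(i) + ε, where ε = 1 if s(a+k+1) = 0 and s(i) = 1 for some i ∈ {a+k−m+1, …, a+k}, and ε = 0 otherwise. (In one time step no car enters the segment from the left, and at most one car — present among the last m sites and not blocked on the right — leaves it on the right.) -/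
/-!
The error term `ε` is the flux of cars across the bond between `a + k` and `a + k + 1`: a car
crosses the bond `(x - 1, x)` in one step exactly when `x` is empty and some car sits among the
`m` sites left of `x` (the nearest such car moves at least up to `x`, and it blocks the others).
This gives the local conservation law `F(x) = s(x) + inflow(x) - inflow(x + 1)`, which telescopes
over `{a + m, …, a + k}`; nothing flows into `a + m` because `a, …, a + m - 1` are empty.
-/

open scoped Classical

open Finset

namespace FukuiIshibashi

variable {m : ℕ} {s : ℤ → Bool} {x : ℤ}

def carWithin (m : ℕ) (s : ℤ → Bool) (x : ℤ) : Prop :=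
  ∃ j : ℕ, 1 ≤ j ∧ j ≤ m ∧ s (x - j) = true

def inflow (m : ℕ) (s : ℤ → Bool) (x : ℤ) : Prop :=
  s x = false ∧ carWithin m s x

theorem carWithin_mono {m' : ℕ} (h : m' ≤ m) : carWithin m' s x → carWithin m s x :=
  fun ⟨j, hj1, hjm, hj⟩ => ⟨j, hj1, hjm.trans h, hj⟩

theorem carWithin_add_one_iff (hm : 1 ≤ m) :
    carWithin m s (x + 1) ↔ s x = true ∨ carWithin (m - 1) s x := by
  constructor
  · rintro ⟨j, hj1, hjm, hj⟩
    rcases Nat.eq_or_lt_of_le hj1 with rfl | hj2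
    · left; simpa using hj
    · right
      refine ⟨j - 1, by omega, by omega, ?_⟩
      rwa [show x - ((j - 1 : ℕ) : ℤ) = x + 1 - j by omega]
  · rintro (hx | ⟨j, hj1, hjm, hj⟩)
    · exact ⟨1, le_rfl, hm, by simpa using hx⟩
    · refine ⟨j + 1, by omega, by omega, ?_⟩
      rwa [show x + 1 - ((j + 1 : ℕ) : ℤ) = x - j by omega]

theorem exists_nearest_of_carWithin (h : carWithin m s x) :
    ∃ j : ℕ, 1 ≤ j ∧ j ≤ m ∧ s (x - j) = true ∧
      ∀ i : ℕ, 1 ≤ i → i < j → s (x - i) = false := by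
  obtain ⟨j, hj1, hjm, hj⟩ := h
  have hex : ∃ j : ℕ, 1 ≤ j ∧ s (x - j) = true := ⟨j, hj1, hj⟩
  obtain ⟨hfind1, hfind⟩ := Nat.find_spec hex
  refine ⟨Nat.find hex, hfind1, (Nat.find_min' hex ⟨hj1, hj⟩).trans hjm, hfind, ?_⟩
  intro i hi1 hi
  simpa [hi1] using Nat.find_min hex hi

theorem fukuiIshibashi_eq_true_iff :
    fukuiIshibashi m s x = true ↔
      (s x = true ∧ s (x + 1) = true) ∨
      (s x = false ∧ ∃ j : ℕ, 1 ≤ j ∧ j ≤ m ∧ s (x - j) = true ∧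
        (∀ k : ℕ, 1 ≤ k → k < j → s (x - k) = false) ∧
        (j = m ∨ s (x + 1) = true)) := by
  unfold fukuiIshibashi
  split_ifs with h <;> simpa using h

theorem fukuiIshibashi_eq_true_iff_of_occupied (hx : s x = true) :
    fukuiIshibashi m s x = true ↔ s (x + 1) = true := by
  simp [fukuiIshibashi_eq_true_iff, hx]

theorem fukuiIshibashi_eq_true_iff_of_empty (hx : s x = false) :
    fukuiIshibashi m s x = true ↔
      carWithin m s x ∧ (s (x + 1) = true ∨ ¬carWithin (m - 1) s x) := by
  simp only [fukuiIshibashi_eq_true_iff, hx, Bool.false_eq_true, false_and, true_and, false_or]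
  constructor
  · rintro ⟨j, hj1, hjm, hj, hmin, hjm' | hnext⟩
    · refine ⟨⟨j, hj1, hjm, hj⟩, Or.inr ?_⟩
      rintro ⟨i, hi1, him, hi⟩
      simp [hmin i hi1 (by omega)] at hi
    · exact ⟨⟨j, hj1, hjm, hj⟩, Or.inl hnext⟩
  · rintro ⟨hcar, hnext | hfar⟩
    all_goals obtain ⟨j, hj1, hjm, hj, hmin⟩ := exists_nearest_of_carWithin hcar
    · exact ⟨j, hj1, hjm, hj, hmin, Or.inr hnext⟩
    · have hjm' : j = m := by
        by_contra hne
        exact hfar ⟨j, hj1, by omega, hj⟩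
      exact ⟨j, hj1, hjm, hj, hmin, Or.inl hjm'⟩

theorem fukuiIshibashi_conservation (hm : 1 ≤ m) (s : ℤ → Bool) (x : ℤ) :
    (if fukuiIshibashi m s x = true then 1 else 0 : ℤ) + (if inflow m s (x + 1) then 1 else 0)
      = (if s x = true then 1 else 0) + (if inflow m s x then 1 else 0) := by
  have hsplit := carWithin_add_one_iff (s := s) (x := x) hm
  have hmono := carWithin_mono (s := s) (x := x) (Nat.sub_le m 1)
  unfold inflow
  cases hx : s x
  -- the only nontrivial case is `s x = s (x + 1) = false`: there it reads `[A ∧ ¬B] + [B] = [A]`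
  -- for `A = carWithin m s x` and `B = carWithin (m - 1) s x`, and `B` implies `A`
  · simp only [fukuiIshibashi_eq_true_iff_of_empty hx]
    by_cases hnear : carWithin (m - 1) s x <;> by_cases hfar : carWithin m s x <;>
      cases s (x + 1) <;> simp_all
  · simp only [fukuiIshibashi_eq_true_iff_of_occupied hx]
    cases s (x + 1) <;> simp_all

theorem sum_Ico_add_inflow (hm : 1 ≤ m) (s : ℤ → Bool) (a : ℤ) {p q : ℕ} (hpq : p ≤ q) :
    (∑ i ∈ Ico p q, (if fukuiIshibashi m s (a + i) = true then 1 else 0 : ℤ))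
        + (if inflow m s (a + q) then 1 else 0)
      = (∑ i ∈ Ico p q, (if s (a + i) = true then 1 else 0 : ℤ))
        + (if inflow m s (a + p) then 1 else 0) := by
  induction q, hpq using Nat.le_induction with
  | base => simp
  | succ q hpq ih =>
    have hstep := fukuiIshibashi_conservation hm s (a + q)
    rw [sum_Ico_succ_top hpq, sum_Ico_succ_top hpq, Nat.cast_succ, ← add_assoc]
    linarith

theorem not_carWithin_of_empty {a : ℤ} (h : ∀ r : ℕ, r < m → s (a + r) = false) :
    ¬carWithin m s (a + m) := by
  rintro ⟨j, hj1, hjm, hj⟩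
  rw [show a + (m : ℤ) - j = a + ((m - j : ℕ) : ℤ) by omega, h (m - j) (by omega)] at hj
  exact Bool.false_ne_true hj

theorem exists_mem_Icc_iff_carWithin {a : ℤ} {k : ℕ} (hmk : m ≤ k) :
    (∃ i ∈ Icc (k - m + 1) k, s (a + i) = true) ↔ carWithin m s (a + k + 1) := by
  constructor
  · rintro ⟨i, hi, hs⟩
    rw [mem_Icc] at hi
    refine ⟨k + 1 - i, by omega, by omega, ?_⟩
    rwa [show a + k + 1 - ((k + 1 - i : ℕ) : ℤ) = a + i by omega]
  · rintro ⟨j, hj1, hjm, hs⟩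
    refine ⟨k + 1 - j, mem_Icc.2 ⟨by omega, by omega⟩, ?_⟩
    rwa [show a + ((k + 1 - j : ℕ) : ℤ) = a + k + 1 - j by omega]

end FukuiIshibashi

/-- If sites `a, …, a+m` are empty, then for every `k ≥ m` the number of cars in
`{a, …, a+k}` equals the number of cars in `{a+m, …, a+k}` one step later, plus
`ε = 1` exactly when a car occupies one of the last `m` sites and site `a+k+1`
is empty (so one car leaves on the right), and `ε = 0` otherwise. -/
theorem car_count_step (m : ℕ) (hm : 1 ≤ m) (s : ℤ → Bool) (a : ℤ)
    (h0 : ∀ r : ℕ, r ≤ m → s (a + (r : ℤ)) = false)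
    (k : ℕ) (hk : m ≤ k) :
    (∑ i ∈ Finset.range (k + 1), (if s (a + (i : ℤ)) = true then 1 else 0 : ℤ))
      = (∑ i ∈ Finset.Icc m k,
          (if fukuiIshibashi m s (a + (i : ℤ)) = true then 1 else 0 : ℤ))
        + (if s (a + (k : ℤ) + 1) = false ∧
              ∃ i ∈ Finset.Icc (k - m + 1) k, s (a + (i : ℤ)) = true
           then 1 else 0) := by
  have hempty : ∑ i ∈ range m, (if s (a + i) = true then 1 else 0 : ℤ) = 0 :=
    sum_eq_zero fun i hi => by simp [h0 i (mem_range.1 hi).le]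
  have hbalance := FukuiIshibashi.sum_Ico_add_inflow hm s a (show m ≤ k + 1 by omega)
  have hno_inflow : ¬FukuiIshibashi.inflow m s (a + m) :=
    fun h => FukuiIshibashi.not_carWithin_of_empty (fun r hr => h0 r hr.le) h.2
  rw [if_neg hno_inflow, add_zero] at hbalance
  simp only [Nat.cast_succ, ← add_assoc, FukuiIshibashi.inflow] at hbalance
  rw [← sum_range_add_sum_Ico _ (show m ≤ k + 1 by omega), hempty, zero_add,
    ← Ico_add_one_right_eq_Icc]
  simp only [FukuiIshibashi.exists_mem_Icc_iff_carWithin hk]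
  linarith
end

section
/- Let m ≥ 1 and let n₀, n₁ ≥ 0 be integers with n₀ + n₁ ≥ 1 and n₀ > m·n₁. Then the number of m-admissible words over {0,1} of length n₀ + n₁ containing exactly n₀ zeros and n₁ ones satisfies: (number of such words) · (n₀ + n₁) = (n₀ − m·n₁) · C(n₀ + n₁, n₁), where C denotes the binomial coefficient. (Equivalently, the number of lattice paths from the origin to (n₀, n₁) that stay strictly above the line x = m·y after the start equals ((n₀ − m·n₁)/(n₀ + n₁))·C(n₀ + n₁, n₁).) -/
open scoped Classical

/-!
Deleting the last letter of an admissible word leaves an admissible word, and appending a letter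
to an admissible word keeps it admissible exactly when the total weight `n₀ - m n₁` of the new
word is positive. So the number of admissible words with `n₀` zeros and `n₁` ones satisfies
Pascal's recurrence in the region `n₀ > m n₁` and vanishes outside it (except for the empty word),
and `(n₀ - m n₁) C(n₀ + n₁, n₁) / (n₀ + n₁)` satisfies the same recurrence.
-/

open Finset

theorem List.count_ofFn {α : Type*} [DecidableEq α] {n : ℕ} (w : Fin n → α) (a : α) :
    (List.ofFn w).count a = #{i | w i = a} := by
  rw [← Multiset.coe_count, ← Fin.univ_val_map, Multiset.count_map, card_def, filter_val]
  simp only [eq_comm]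

theorem sum_map_xiVal (m : ℕ) (l : List Bool) :
    (l.map (xiVal m)).sum = l.count false - m * l.count true := by
  induction l with
  | nil => simp
  | cons b l ih => cases b <;> simp [xiVal, ih] <;> ring

theorem mAdmissible_append_singleton {m : ℕ} {l : List Bool} {b : Bool} :
    mAdmissible m (l ++ [b]) ↔ mAdmissible m l ∧ 0 < ((l ++ [b]).map (xiVal m)).sum := by
  constructor
  · intro h
    refine ⟨fun k hk1 hk2 => ?_, by simpa using h (l.length + 1) (by omega) (by simp)⟩
    simpa [List.take_append_of_le_length hk2] using h k hk1 (by simp; omega)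
  · rintro ⟨hl, hsum⟩ k hk1 hk2
    rcases le_or_gt k l.length with hk | hk
    · rw [List.take_append_of_le_length hk]
      exact hl k hk1 hk
    · rwa [List.take_of_length_le (by simp at hk2 ⊢; omega)]

theorem mAdmissible.sum_pos {m : ℕ} {l : List Bool} (h : mAdmissible m l) (hl : l ≠ []) :
    0 < (l.map (xiVal m)).sum := by
  simpa using h l.length (List.length_pos_iff.2 hl) le_rfl

theorem mAdmissible_replicate_false (m n : ℕ) : mAdmissible m (List.replicate n false) := by
  induction n with
  | zero => intro k hk1 hk2; simp at hk2; omega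
  | succ n ih =>
    rw [List.replicate_succ']
    exact mAdmissible_append_singleton.2 ⟨ih, by simp [xiVal]⟩

noncomputable def ballotWords (m n0 n1 : ℕ) : Finset (List Bool) :=
  ((univ : Finset (Fin (n0 + n1) → Bool)).image List.ofFn).filter
    fun l => mAdmissible m l ∧ l.count true = n1 ∧ l.count false = n0

theorem mem_ballotWords {m n0 n1 : ℕ} {l : List Bool} :
    l ∈ ballotWords m n0 n1 ↔ mAdmissible m l ∧ l.count true = n1 ∧ l.count false = n0 := by
  simp only [ballotWords, mem_filter, mem_image, mem_univ, true_and, and_iff_right_iff_imp]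
  rintro ⟨-, h1, h0⟩
  rw [← h0, ← h1, List.count_false_add_count_true]
  exact ⟨l.get, List.ofFn_get l⟩

theorem card_filter_ofFn_eq_card_ballotWords (m n0 n1 : ℕ) :
    #{w : Fin (n0 + n1) → Bool | mAdmissible m (List.ofFn w) ∧
      #{i | w i = true} = n1 ∧ #{i | w i = false} = n0} = #(ballotWords m n0 n1) := by
  rw [ballotWords, filter_image, card_image_of_injective _ List.ofFn_injective]
  simp only [List.count_ofFn]

theorem ballotWords_zero_right (m n0 : ℕ) : ballotWords m n0 0 = {List.replicate n0 false} := by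
  ext l
  simp only [mem_ballotWords, mem_singleton]
  constructor
  · rintro ⟨-, htrue, rfl⟩
    rw [List.eq_replicate_iff, ← List.count_false_add_count_true, htrue]
    refine ⟨rfl, fun b hb => ?_⟩
    cases b
    · rfl
    · exact absurd htrue (List.count_pos_iff.2 hb).ne'
  · rintro rfl
    exact ⟨mAdmissible_replicate_false m n0, by simp [List.count_replicate], by simp⟩

theorem ballotWords_eq_empty {m n0 n1 : ℕ} (hpos : 0 < n0 + n1) (h : n0 ≤ m * n1) :
    ballotWords m n0 n1 = ∅ := by
  refine eq_empty_of_forall_notMem fun l hl => ?_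
  obtain ⟨hadm, h1, h0⟩ := mem_ballotWords.1 hl
  have hne : l ≠ [] := by
    rintro rfl
    simp at h0 h1
    omega
  have hsum := hadm.sum_pos hne
  rw [sum_map_xiVal, h1, h0] at hsum
  have : (n0 : ℤ) ≤ m * n1 := by exact_mod_cast h
  linarith

theorem ballotWords_succ_succ {m n0 n1 : ℕ} (h : m * (n1 + 1) < n0 + 1) :
    ballotWords m (n0 + 1) (n1 + 1) =
      (ballotWords m n0 (n1 + 1)).image (· ++ [false]) ∪
        (ballotWords m (n0 + 1) n1).image (· ++ [true]) := by
  have h' : (m : ℤ) * (n1 + 1) < n0 + 1 := by exact_mod_cast h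
  ext l
  obtain rfl | ⟨l, b, rfl⟩ := List.eq_nil_or_concat' l
  · simp [mem_ballotWords]
  · cases b <;> simp [mem_ballotWords, mAdmissible_append_singleton, sum_map_xiVal, xiVal] <;>
      rintro h1 h0 - <;> rw [h1, h0] <;> push_cast <;> linarith

theorem card_ballotWords_succ_succ {m n0 n1 : ℕ} (h : m * (n1 + 1) < n0 + 1) :
    #(ballotWords m (n0 + 1) (n1 + 1)) =
      #(ballotWords m n0 (n1 + 1)) + #(ballotWords m (n0 + 1) n1) := by
  rw [ballotWords_succ_succ h, card_union_of_disjoint,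
    card_image_of_injective _ (List.append_left_injective _),
    card_image_of_injective _ (List.append_left_injective _)]
  simp [disjoint_left]

/-- The subtraction `n0 - m * n1` truncates, so the identity also covers the region
`n0 ≤ m * n1`, where both sides vanish; this keeps the induction free of side conditions. -/
theorem card_ballotWords_mul (m n0 n1 : ℕ) :
    #(ballotWords m n0 n1) * (n0 + n1) = (n0 - m * n1) * (n0 + n1).choose n1 := by
  induction n1 generalizing n0 with
  | zero => simp [ballotWords_zero_right]
  | succ n1 ihn1 =>
    induction n0 with
    | zero => simp [ballotWords_eq_empty]
    | succ n0 ihn0 =>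
      by_cases h : m * (n1 + 1) < n0 + 1
      swap
      · simp [ballotWords_eq_empty, Nat.sub_eq_zero_of_le (not_lt.1 h), not_lt.1 h]
      have hb := ihn1 (n0 + 1)
      have hpascal := Nat.choose_succ_succ (n0 + n1 + 1) n1
      have habsorb := Nat.choose_succ_right_eq (n0 + n1 + 1) n1
      rw [← Nat.add_assoc] at ihn0
      rw [Nat.add_right_comm] at hb
      rw [show n0 + n1 + 1 - n1 = n0 + 1 by omega] at habsorb
      rw [card_ballotWords_succ_succ h, show n0 + 1 + (n1 + 1) = n0 + n1 + 1 + 1 by omega]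
      refine Nat.eq_of_mul_eq_mul_right (show 0 < n0 + n1 + 1 by omega) ?_
      zify [h.le, show m * (n1 + 1) ≤ n0 by omega, show m * n1 ≤ n0 + 1 by nlinarith]
        at ihn0 hb hpascal habsorb ⊢
      linear_combination (n0 + n1 + 2 : ℤ) * ihn0 + (n0 + n1 + 2 : ℤ) * hb
        - ((n0 : ℤ) + 1 - m * (n1 + 1)) * (n0 + n1 + 1) * hpascal - (m + 1 : ℤ) * habsorb

theorem card_mAdmissible_words_general (m n0 n1 : ℕ) :
    (Finset.univ.filter (fun w : Fin (n0 + n1) → Bool =>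
        mAdmissible m (List.ofFn w) ∧
        (Finset.univ.filter (fun i => w i = true)).card = n1 ∧
        (Finset.univ.filter (fun i => w i = false)).card = n0)).card * (n0 + n1)
      = (n0 - m * n1) * Nat.choose (n0 + n1) n1 := by
  rw [card_filter_ofFn_eq_card_ballotWords]
  exact card_ballotWords_mul m n0 n1

/-- The number of `m`-admissible words of length `n₀+n₁` with `n₀` zeros and
`n₁` ones, multiplied by `n₀+n₁`, equals `(n₀ − m·n₁)·C(n₀+n₁, n₁)`. -/
theorem card_mAdmissible_words (m n0 n1 : ℕ) (hm : 1 ≤ m)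
    (h1 : 1 ≤ n0 + n1) (h2 : m * n1 < n0) :
    (Finset.univ.filter (fun w : Fin (n0 + n1) → Bool =>
        mAdmissible m (List.ofFn w) ∧
        (Finset.univ.filter (fun i => w i = true)).card = n1 ∧
        (Finset.univ.filter (fun i => w i = false)).card = n0)).card * (n0 + n1)
      = (n0 - m * n1) * Nat.choose (n0 + n1) n1 :=
  card_mAdmissible_words_general m n0 n1
end

section
/- Let m ≥ 1 and t ≥ 0 be integers and let ρ be a real number. Then Σ_a ρ^{N₁(a)} (1−ρ)^{N₀(a)} = Σ_{j=1}^{t+1} (j/(t+1)) · C((m+1)(t+1), t+1−j) · ρ^{t+1−j} (1−ρ)^{m(t+1)+j}, where the left-hand sum ranges over all m-admissible words a of length (m+1)(t+1) over {0,1}, N₁(a) and N₀(a) denote the number of ones and zeros in a respectively, and C denotes the binomial coefficient. -/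
open scoped Classical

/-
Raney's cycle lemma. Give the letter 0 the weight +1 and the letter 1 the weight −m, so that a
word of length n with k ones has total weight n − (m+1)k. Extend the word periodically and let F
be its walk of partial sums: F rises by at most one per step and gains the total weight s over
each period. A rotation is admissible iff it starts at a strict ladder point of F (a time after
which F stays strictly above its current value), and the last visits of F to the levels
min F, …, min F + s − 1 are exactly the ladder points of one period, so a word has precisely
(n − (m+1)k)₊ admissible rotations. Rotations preserve ρ^{N₁}(1−ρ)^{N₀}, so averaging over them
gives n · (left side) = Σ_k C(n,k) (n − (m+1)k)₊ ρ^k (1−ρ)^{n−k}; only k ≤ t contributes, and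
k = t + 1 − j yields the right side.
-/

open Finset

section LadderPoints

def IsLadderPoint (F : ℕ → ℤ) (r : ℕ) : Prop := ∀ j, r < j → F r < F j

variable {F : ℕ → ℤ} {n s : ℕ}

theorem apply_add_mul_period (hper : ∀ j, F (j + n) = F j + s) (j q : ℕ) :
    F (j + n * q) = F j + q * s := by
  induction q with
  | zero => simp
  | succ q ih => rw [Nat.mul_succ, ← add_assoc, hper, ih]; push_cast; ring

theorem isLadderPoint_iff_forall_le_period (hn : 0 < n) (hper : ∀ j, F (j + n) = F j + s)
    (r : ℕ) :
    IsLadderPoint F r ↔ ∀ k, 1 ≤ k → k ≤ n → F r < F (r + k) := by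
  refine ⟨fun h k hk _ => h _ (by omega), fun h j hj => ?_⟩
  obtain ⟨k, q, hk₁, hkn, rfl⟩ : ∃ k q, 1 ≤ k ∧ k ≤ n ∧ j = r + k + n * q :=
    ⟨(j - r - 1) % n + 1, (j - r - 1) / n, by omega,
      Nat.mod_lt _ hn, by have := Nat.mod_add_div (j - r - 1) n; omega⟩
  rw [apply_add_mul_period hper]
  have := h k hk₁ hkn
  have : (0 : ℤ) ≤ q * s := by positivity
  omega

theorem exists_isLadderPoint_apply_eq (hstep : ∀ j, F (j + 1) ≤ F j + 1)
    (hper : ∀ j, F (j + n) = F j + s) {v : ℤ} (hv : ∃ j, F j ≤ v)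
    (hvs : ∀ j, v < F j + s) : ∃ r < n, IsLadderPoint F r ∧ F r = v := by
  have lt_of_apply_le : ∀ j, F j ≤ v → j < n := by
    intro j hj
    by_contra! h
    have := hper (j - n)
    rw [Nat.sub_add_cancel h] at this
    have := hvs (j - n)
    omega
  obtain ⟨j₀, hj₀⟩ := hv
  set r := Nat.findGreatest (fun j => F j ≤ v) n
  have hr : F r ≤ v :=
    Nat.findGreatest_spec (P := fun j => F j ≤ v) (lt_of_apply_le j₀ hj₀).le hj₀
  have lt_of_lt : ∀ j, r < j → v < F j := fun j hj => by
    by_contra! h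
    exact Nat.findGreatest_is_greatest hj (lt_of_apply_le j h).le h
  refine ⟨r, lt_of_apply_le r hr, fun j hj => hr.trans_lt (lt_of_lt j hj), ?_⟩
  have := hstep r
  have := lt_of_lt (r + 1) r.lt_add_one
  omega

theorem card_isLadderPoint [NeZero n] (hstep : ∀ j, F (j + 1) ≤ F j + 1)
    (hper : ∀ j, F (j + n) = F j + s) : #{r : Fin n | IsLadderPoint F r} = s := by
  obtain ⟨i₀, hi₀⟩ := Finite.exists_min (fun i : Fin n => F i)
  have hmin : ∀ j, F i₀ ≤ F j := by
    intro j
    rw [← Nat.mod_add_div j n, apply_add_mul_period hper]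
    have : F i₀ ≤ F (j % n) := hi₀ ⟨j % n, Nat.mod_lt _ (NeZero.pos n)⟩
    have : (0 : ℤ) ≤ (j / n : ℕ) * s := by positivity
    omega
  have himage : image (fun r : Fin n => F r) {r | IsLadderPoint F r} =
      Ico (F i₀) (F i₀ + s) := by
    ext v
    simp only [mem_image, mem_filter, mem_univ, true_and, mem_Ico]
    constructor
    · rintro ⟨r, hr, rfl⟩
      exact ⟨hmin r, (hr (i₀ + n) (by omega)).trans_eq (hper i₀)⟩
    · rintro ⟨h₁, h₂⟩
      obtain ⟨r, hrn, hr, rfl⟩ := exists_isLadderPoint_apply_eq hstep hper ⟨i₀, h₁⟩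
        (fun j => by have := hmin j; omega)
      exact ⟨⟨r, hrn⟩, hr, rfl⟩
  have hinj : Set.InjOn (fun r : Fin n => F r) ({r | IsLadderPoint F r} : Finset (Fin n)) := by
    intro r hr r' hr' h
    simp only [mem_coe, mem_filter, mem_univ, true_and] at hr hr'
    rcases lt_trichotomy r r' with hlt | heq | hlt
    · exact absurd h (hr _ hlt).ne
    · exact heq
    · exact absurd h (hr' _ hlt).ne'
  rw [← card_image_of_injOn hinj, himage, Int.card_Ico]
  simp

end LadderPoints

section CycleLemma

open Fin.NatCast

variable {n : ℕ} [NeZero n]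

theorem card_rotations_prefix_sums_pos (x : Fin n → ℤ) (hx : ∀ i, x i ≤ 1) :
    #{r : Fin n | ∀ k, 1 ≤ k → k ≤ n → 0 < ∑ i ∈ range k, x (r + (i : Fin n))} =
      (∑ i, x i).toNat := by
  set F : ℕ → ℤ := fun k => ∑ i ∈ range k, x (i : Fin n)
  have F_add : ∀ j k, F (j + k) = F j + ∑ i ∈ range k, x ((j : Fin n) + (i : Fin n)) := by
    intro j k
    simp only [F, sum_range_add, Nat.cast_add]
  have sum_rotate : ∀ r : Fin n, ∑ i ∈ range n, x (r + (i : Fin n)) = ∑ i, x i := fun r => by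
    rw [← Fin.sum_univ_eq_sum_range (fun i => x (r + (i : Fin n)))]
    simpa using Equiv.sum_comp (Equiv.addLeft r) x
  rcases lt_or_ge (∑ i, x i) 0 with hneg | hnonneg
  · rw [Int.toNat_of_nonpos hneg.le, card_eq_zero, eq_empty_iff_forall_notMem]
    intro r hr
    simp only [mem_filter, mem_univ, true_and] at hr
    have := hr n NeZero.one_le le_rfl
    rw [sum_rotate] at this
    omega
  obtain ⟨s, hs⟩ := Int.eq_ofNat_of_zero_le hnonneg
  have hper : ∀ j, F (j + n) = F j + s := fun j => by rw [F_add, sum_rotate, hs]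
  have hstep : ∀ j, F (j + 1) ≤ F j + 1 := fun j => by
    rw [F_add]
    simpa using hx _
  rw [hs, Int.toNat_natCast, ← card_isLadderPoint hstep hper]
  congr 1
  ext r
  simp only [mem_filter, isLadderPoint_iff_forall_le_period (NeZero.pos n) hper, F_add,
    Fin.cast_val_eq_self, lt_add_iff_pos_right]

end CycleLemma

section Words

open Fin.NatCast

variable {n : ℕ}

theorem sum_take_ofFn_eq_sum_range {M : Type*} [AddCommMonoid M] [NeZero n] (f : Fin n → M)
    {k : ℕ} (hk : k ≤ n) : ((List.ofFn f).take k).sum = ∑ i ∈ range k, f i := by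
  induction k with
  | zero => simp
  | succ k ih =>
    rw [List.sum_take_succ _ _ (by simpa using hk), ih (by omega), sum_range_succ,
      List.getElem_ofFn, Fin.natCast_eq_mk]

theorem mAdmissible_ofFn_iff [NeZero n] (m : ℕ) (w : Fin n → Bool) :
    mAdmissible m (List.ofFn w) ↔ ∀ k, 1 ≤ k → k ≤ n → 0 < ∑ i ∈ range k, xiVal m (w i) := by
  unfold mAdmissible
  rw [List.length_ofFn]
  refine forall₃_congr fun k _ hk => ?_
  rw [List.map_take, List.map_ofFn, sum_take_ofFn_eq_sum_range _ hk]
  rfl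

theorem sum_xiVal (m : ℕ) (w : Fin n → Bool) :
    ∑ i, xiVal m (w i) = n - ((m + 1) * #{i | w i = true} : ℕ) := by
  have h : ∀ b, xiVal m b = 1 - (m + 1) * if b = true then 1 else 0 := by
    intro b; cases b <;> simp [xiVal]
  simp only [h, sum_sub_distrib, ← mul_sum, sum_boole]
  simp

theorem card_filter_eq_false {ι : Type*} [Fintype ι] (w : ι → Bool) :
    #{i | w i = false} = Fintype.card ι - #{i | w i = true} := by
  have := card_filter_add_card_filter_not (s := univ) (fun i => w i = true)
  simp only [Bool.not_eq_true, card_univ] at this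
  omega

theorem card_mAdmissible_rotations [NeZero n] (m : ℕ) (w : Fin n → Bool) :
    #{r : Fin n | mAdmissible m (List.ofFn fun i => w (r + i))} =
      n - (m + 1) * #{i | w i = true} := by
  have hx : ∀ i, xiVal m (w i) ≤ 1 := fun i => by cases w i <;> simp [xiVal]
  -- the truncated subtraction is right: no rotation is admissible when the total weight is ≤ 0
  have := card_rotations_prefix_sums_pos _ hx
  rw [sum_xiVal] at this
  simp only [mAdmissible_ofFn_iff]
  convert this using 3
  omega

end Words

theorem card_filter_add_left {G : Type*} [AddGroup G] [Fintype G] {p : G → Prop}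
    [DecidablePred p] (g : G) : #{i | p (g + i)} = #{i | p i} := by
  simp only [card_filter]
  exact Equiv.sum_comp (Equiv.addLeft g) (fun i => if p i then 1 else 0)

theorem card_nsmul_sum_filter_eq_sum_card_translates_smul {G α M : Type*} [AddGroup G] [Fintype G]
    [DecidableEq G] [Fintype α] [AddCommMonoid M] (P : (G → α) → Prop) (φ : (G → α) → M)
    (hφ : ∀ g w, φ (fun i => w (g + i)) = φ w) :
    Fintype.card G • ∑ w with P w, φ w = ∑ w, #{g : G | P fun i => w (g + i)} • φ w := by
  calc Fintype.card G • ∑ w with P w, φ w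
      = ∑ _g : G, ∑ w with P w, φ w := by rw [sum_const, card_univ]
    _ = ∑ g : G, ∑ w, if P fun i => w (g + i) then φ w else 0 := by
        refine sum_congr rfl fun g _ => ?_
        rw [sum_filter, ← ((Equiv.addLeft g).symm.arrowCongr (Equiv.refl α)).sum_comp]
        exact sum_congr rfl fun w _ => by rw [← hφ g w]; rfl
    _ = ∑ w, #{g : G | P fun i => w (g + i)} • φ w := by
        rw [sum_comm]
        simp only [← sum_filter, sum_const]

theorem sum_fun_bool_apply_card {ι M : Type*} [Fintype ι] [DecidableEq ι] [AddCommMonoid M]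
    (f : ℕ → M) :
    ∑ w : ι → Bool, f #{i | w i = true} =
      ∑ k ∈ range (Fintype.card ι + 1), (Fintype.card ι).choose k • f k := by
  let e : (ι → Bool) ≃ Finset ι :=
    { toFun w := {i | w i = true}
      invFun s i := decide (i ∈ s)
      left_inv w := by funext i; simp
      right_inv s := by ext i; simp }
  rw [Fintype.sum_equiv e (fun w => f #{i | w i = true}) (fun s => f #s) fun _ => rfl,
    ← powerset_univ, sum_powerset_apply_card, card_univ]

theorem sum_choose_smul_tsub_smul_eq (m t : ℕ) (ρ : ℝ) :
    ∑ k ∈ range ((m + 1) * (t + 1) + 1), ((m + 1) * (t + 1)).choose k •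
        (((m + 1) * (t + 1) - (m + 1) * k) • (ρ ^ k * (1 - ρ) ^ ((m + 1) * (t + 1) - k))) =
      ((m + 1) * (t + 1) : ℕ) * ∑ j ∈ Icc 1 (t + 1), (j : ℝ) / (t + 1) *
        ((m + 1) * (t + 1)).choose (t + 1 - j) * ρ ^ (t + 1 - j) * (1 - ρ) ^ (m * (t + 1) + j) := by
  set n := (m + 1) * (t + 1) with hn
  have hle : t + 1 ≤ n := Nat.le_mul_of_pos_left _ m.succ_pos
  rw [← sum_subset (range_subset_range.2 (by omega : t + 1 ≤ n + 1)), mul_sum]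
  · refine sum_nbij' (fun k => t + 1 - k) (fun j => t + 1 - j)
      (fun k hk => by simp only [mem_range, mem_Icc] at hk ⊢; omega)
      (fun j hj => by simp only [mem_range, mem_Icc] at hj ⊢; omega)
      (fun k hk => by simp only [mem_range] at hk; omega)
      (fun j hj => by simp only [mem_Icc] at hj; omega) fun k hk => ?_
    simp only [mem_range] at hk
    have h₁ : n - (m + 1) * k = (m + 1) * (t + 1 - k) := by
      rw [hn, ← Nat.mul_sub]
    have h₂ : m * (t + 1) + (t + 1 - k) = n - k := by
      have : n = m * (t + 1) + (t + 1) := by rw [hn]; ring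
      omega
    have hnR : (n : ℝ) = (m + 1) * (t + 1) := by rw [hn]; push_cast; ring
    rw [h₁, h₂, Nat.sub_sub_self hk.le, nsmul_eq_mul, nsmul_eq_mul, hnR]
    push_cast [Nat.cast_sub hk.le]
    field_simp
  · intro k _ hk
    have : n ≤ (m + 1) * k := Nat.mul_le_mul_left _ (by simpa using hk)
    simp [Nat.sub_eq_zero_of_le this]

theorem sum_over_mAdmissible_general (m t : ℕ) (ρ : ℝ) :
    (∑ w ∈ Finset.univ.filter
        (fun w : Fin ((m + 1) * (t + 1)) → Bool => mAdmissible m (List.ofFn w)),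
      ρ ^ (Finset.univ.filter (fun i => w i = true)).card *
        (1 - ρ) ^ (Finset.univ.filter (fun i => w i = false)).card)
    = ∑ j ∈ Finset.Icc 1 (t + 1),
        (j : ℝ) / (t + 1) * (Nat.choose ((m + 1) * (t + 1)) (t + 1 - j) : ℝ) *
          ρ ^ (t + 1 - j) * (1 - ρ) ^ (m * (t + 1) + j) := by
  set n := (m + 1) * (t + 1)
  have : NeZero n := ⟨by positivity⟩
  have hn : (n : ℝ) ≠ 0 := Nat.cast_ne_zero.2 (NeZero.ne n)
  have rotate_invariant : ∀ (r : Fin n) (w : Fin n → Bool),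
      ρ ^ #{i | w (r + i) = true} * (1 - ρ) ^ #{i | w (r + i) = false} =
        ρ ^ #{i | w i = true} * (1 - ρ) ^ #{i | w i = false} := fun r w => by
    rw [card_filter_add_left (p := fun i => w i = true),
      card_filter_add_left (p := fun i => w i = false)]
  have double_count := card_nsmul_sum_filter_eq_sum_card_translates_smul
    (fun w : Fin n → Bool => mAdmissible m (List.ofFn w))
    (fun w => ρ ^ #{i | w i = true} * (1 - ρ) ^ #{i | w i = false}) rotate_invariant
  rw [Fintype.card_fin] at double_count
  rw [← mul_right_inj' hn, ← nsmul_eq_mul, double_count, ← sum_choose_smul_tsub_smul_eq]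
  simp only [card_mAdmissible_rotations, card_filter_eq_false, Fintype.card_fin]
  simpa using sum_fun_bool_apply_card (ι := Fin n)
    fun k => (n - (m + 1) * k) • (ρ ^ k * (1 - ρ) ^ (n - k))

/-- Summing `ρ^{N₁(a)}(1−ρ)^{N₀(a)}` over all `m`-admissible words `a` of
length `(m+1)(t+1)` gives the closed formula for `P_t(0^{m+1})`. -/
theorem sum_over_mAdmissible (m t : ℕ) (hm : 1 ≤ m) (ρ : ℝ) :
    (∑ w ∈ Finset.univ.filter
        (fun w : Fin ((m + 1) * (t + 1)) → Bool => mAdmissible m (List.ofFn w)),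
      ρ ^ (Finset.univ.filter (fun i => w i = true)).card *
        (1 - ρ) ^ (Finset.univ.filter (fun i => w i = false)).card)
    = ∑ j ∈ Finset.Icc 1 (t + 1),
        (j : ℝ) / (t + 1) * (Nat.choose ((m + 1) * (t + 1)) (t + 1 - j) : ℝ) *
          ρ ^ (t + 1 - j) * (1 - ρ) ^ (m * (t + 1) + j) :=
  sum_over_mAdmissible_general m t ρ
end

section
/- Let m ≥ 1 and t ≥ 0 be integers and let ρ ∈ [0,1]. Then μ_ρ({s ∈ ({0,1})^ℤ : (F_m^t s)(r) = 0 for all r ∈ {0, 1, …, m}}) = Σ_{j=1}^{t+1} (j/(t+1)) · C((m+1)(t+1), t+1−j) · ρ^{t+1−j} (1−ρ)^{m(t+1)+j}, where C denotes the binomial coefficient. (This is the probability P_t(0^{m+1}) of a block of m+1 zeros at time t starting from a Bernoulli(ρ) random initial configuration.) -/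
open scoped Classical
open MeasureTheory

/-- `μ` is the Bernoulli(ρ) product measure on `{0,1}^ℤ`: every finite cylinder
has the corresponding product probability. -/
def IsBernoulli (μ : Measure (ℤ → Bool)) (ρ : ℝ) : Prop :=
  ∀ (S : Finset ℤ) (b : ℤ → Bool),
    μ {s | ∀ i ∈ S, s i = b i}
      = ∏ i ∈ S, ENNReal.ofReal (if b i then ρ else 1 - ρ)

/-!
Cars are conserved: if `flux m s i ∈ {0, 1}` records whether a car crosses the bond `i → i + 1`,
one step of `F_m` changes the occupation of cell `i` by `flux (i - 1) - flux i`. Telescoping this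
identity shows that `F_m s` satisfies the ballot condition on a window starting at `a + m` (every
prefix of length `n` holds fewer than `n / (m + 1)` cars) iff `s` satisfies it on the window
starting at `a` that is `m + 1` cells longer. Iterating, `F_m^t s` vanishes on `0, …, m` iff the
word `s(-mt), …, s(m + t)` of length `N = (m + 1)(t + 1)` is a ballot word. The number of ballot
words with `k` cars obeys Pascal's recursion, which gives `(N - (m + 1)k) / N · C(N, k)`, and the
Bernoulli measure gives each of them the weight `ρ^k (1 - ρ)^(N - k)`.
-/

open Finset

section Words

variable {N : ℕ}

def ones (w : Fin N → Bool) : ℕ := ∑ i, (w i).toNat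

def IsBallot (m : ℕ) (w : Fin N → Bool) : Prop :=
  ∀ n (h : n < N), (m + 1) * ones (Fin.take (n + 1) h w) ≤ n

lemma ones_snoc (v : Fin N → Bool) (x : Bool) :
    ones (Fin.snoc v x : Fin (N + 1) → Bool) = ones v + x.toNat := by
  simp [ones, Fin.sum_univ_castSucc]

lemma isBallot_snoc {m : ℕ} (v : Fin N → Bool) (x : Bool) :
    IsBallot m (Fin.snoc v x : Fin (N + 1) → Bool) ↔
      IsBallot m v ∧ (m + 1) * (ones v + x.toNat) ≤ N := by
  have htake : ∀ n (h : n < N),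
      Fin.take (n + 1) (Nat.lt_succ_of_lt h) (Fin.snoc v x : Fin (N + 1) → Bool) =
        Fin.take (n + 1) h v := fun n h => by
    rw [← Fin.take_init, Fin.init_snoc]
  constructor
  · intro hw
    refine ⟨fun n h => htake n h ▸ hw n (Nat.lt_succ_of_lt h), ?_⟩
    simpa [← ones_snoc] using hw N N.lt_succ_self
  · rintro ⟨hv, hlast⟩ n h
    rcases Nat.lt_succ_iff_lt_or_eq.1 h with h | rfl
    · exact htake n h ▸ hv n h
    · simpa [ones_snoc] using hlast

lemma mul_ones_lt_of_isBallot {m : ℕ} {w : Fin (N + 1) → Bool} (hw : IsBallot m w) :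
    (m + 1) * ones w < N + 1 := by
  simpa [Nat.lt_succ_iff] using hw N N.lt_succ_self

lemma card_filter_snoc (P : (Fin (N + 1) → Bool) → Prop) [DecidablePred P] :
    #{w | P w} = #{v | P (Fin.snoc v true)} + #{v | P (Fin.snoc v false)} := by
  simp only [card_filter]
  rw [← (Fin.snocEquiv fun _ => Bool).sum_comp, Fintype.sum_prod_type, Fintype.sum_bool]
  rfl

noncomputable def ballotCount (m N k : ℕ) : ℕ :=
  #{w : Fin N → Bool | IsBallot m w ∧ ones w = k}

lemma ballotCount_zero_right (m N : ℕ) : ballotCount m N 0 = 1 := by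
  rw [ballotCount, card_eq_one]
  refine ⟨fun _ => false, ?_⟩
  ext w
  simp only [mem_filter, mem_univ, true_and, mem_singleton]
  have hzero : ∀ {n} (v : Fin n → Bool), ones v = 0 ↔ v = fun _ => false := by
    intro n v
    simp [ones, funext_iff]
  constructor
  · exact fun h => (hzero w).1 h.2
  · rintro rfl
    exact ⟨fun n h => by simp [ones, Fin.take], (hzero _).2 rfl⟩

lemma ballotCount_succ_succ (m N k : ℕ) :
    ballotCount m (N + 1) (k + 1) =
      if (m + 1) * (k + 1) ≤ N then ballotCount m N (k + 1) + ballotCount m N k else 0 := by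
  rw [ballotCount, card_filter_snoc]
  simp only [isBallot_snoc, ones_snoc, Bool.toNat_true, Bool.toNat_false, add_zero]
  split_ifs with h
  · rw [add_comm, ballotCount, ballotCount]
    congr 2 <;> ext v <;> simp only [mem_filter, mem_univ, true_and] <;> grind
  · rw [Nat.add_eq_zero_iff]
    constructor <;> refine card_eq_zero.2 (filter_eq_empty_iff.2 fun v _ hv => h ?_) <;>
      obtain ⟨⟨-, h1⟩, h2⟩ := hv <;> rwa [h2] at h1

lemma mul_ballotCount (m : ℕ) :
    ∀ N k, (m + 1) * k ≤ N → N * ballotCount m N k = (N - (m + 1) * k) * N.choose k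
  | 0, k, h => by simp
  | N + 1, 0, _ => by simp [ballotCount_zero_right]
  | N + 1, k + 1, h => by
    rw [ballotCount_succ_succ]
    split_ifs with hle
    · have hN : 0 < N := lt_of_lt_of_le (by positivity) hle
      have ih₁ := mul_ballotCount m N (k + 1) hle
      have ih₀ := mul_ballotCount m N k (le_trans (by nlinarith) hle)
      have hk : k ≤ N := le_trans (by nlinarith) hle
      have c₁ := Nat.add_one_mul_choose_eq N k
      have c₂ := Nat.choose_mul_succ_eq N (k + 1)
      rw [Nat.add_sub_add_right] at c₂
      apply Nat.eq_of_mul_eq_mul_left hN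
      zify [hle, hk, (by nlinarith : (m + 1) * k ≤ N),
        (by omega : (m + 1) * (k + 1) ≤ N + 1)] at *
      linear_combination (↑N + 1) * ih₁ + (↑N + 1) * ih₀
        + ((N : ℤ) - (m + 1) * (k + 1)) * c₂ + ((N : ℤ) - (m + 1) * k) * c₁
    · simp [show N + 1 - (m + 1) * (k + 1) = 0 by omega]

lemma sum_isBallot_eq_sum_ballotCount {M : Type*} [AddCommMonoid M] {m N : ℕ} (K : ℕ)
    (hN : N ≤ (m + 1) * (K + 1)) (f : ℕ → M) :
    ∑ w : Fin N → Bool with IsBallot m w, f (ones w) =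
      ∑ k ∈ range (K + 1), ballotCount m N k • f k := by
  have hmaps : ∀ w ∈ univ.filter (IsBallot (N := N) m), ones w ∈ range (K + 1) := by
    intro w hw
    cases N with
    | zero => simp [ones]
    | succ N =>
      have := mul_ones_lt_of_isBallot (mem_filter.1 hw).2
      rw [mem_range]
      nlinarith
  rw [← sum_fiberwise_of_maps_to hmaps]
  refine sum_congr rfl fun k _ => ?_
  rw [filter_filter, sum_congr rfl fun w hw => by rw [(mem_filter.1 hw).2.2], sum_const]
  rfl

lemma ballotCount_eq_div {m t k : ℕ} (hk : k ≤ t) :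
    (ballotCount m ((m + 1) * (t + 1)) k : ℝ) =
      ((t + 1 - k : ℕ) : ℝ) / (t + 1) * ((m + 1) * (t + 1)).choose k := by
  have h := mul_ballotCount m ((m + 1) * (t + 1)) k (by nlinarith)
  rw [← Nat.mul_sub_left_distrib, mul_assoc, mul_assoc] at h
  have h' := congrArg (Nat.cast : ℕ → ℝ) (Nat.eq_of_mul_eq_mul_left (Nat.succ_pos m) h)
  push_cast at h'
  rw [div_mul_eq_mul_div, eq_div_iff (by positivity)]
  linarith

end Words

section Dynamics

variable {m : ℕ} {s : ℤ → Bool} {a : ℤ}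

def window (s : ℤ → Bool) (a : ℤ) (N : ℕ) : Fin N → Bool := fun i => s (a + i)

def numCars (s : ℤ → Bool) (a : ℤ) (n : ℕ) : ℕ := ones (window s a n)

lemma numCars_eq_sum_range (s : ℤ → Bool) (a : ℤ) (n : ℕ) :
    numCars s a n = ∑ i ∈ range n, (s (a + i)).toNat :=
  Fin.sum_univ_eq_sum_range (fun i => (s (a + i)).toNat) n

lemma numCars_zero (s : ℤ → Bool) (a : ℤ) : numCars s a 0 = 0 := rfl

lemma numCars_succ (s : ℤ → Bool) (a : ℤ) (n : ℕ) :
    numCars s a (n + 1) = numCars s a n + (s (a + n)).toNat := by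
  simp only [numCars_eq_sum_range, sum_range_succ]

lemma numCars_add (s : ℤ → Bool) (a : ℤ) (n k : ℕ) :
    numCars s a (n + k) = numCars s a n + numCars s (a + n) k := by
  simp only [numCars_eq_sum_range, sum_range_add, Nat.cast_add, add_assoc]

lemma numCars_eq_zero_iff {n : ℕ} :
    numCars s a n = 0 ↔ ∀ p, a ≤ p → p < a + n → s p = false := by
  rw [numCars_eq_sum_range, sum_eq_zero_iff]
  constructor
  · intro h p hp₁ hp₂
    have := h (p - a).toNat (by simp; omega)
    rwa [show a + (p - a).toNat = p by omega, Bool.toNat_eq_zero] at this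
  · intro h i hi
    simpa using h (a + i) (by omega) (by simp at hi; omega)

lemma isBallot_window_iff {N : ℕ} :
    IsBallot m (window s a N) ↔ ∀ n < N, (m + 1) * numCars s a (n + 1) ≤ n := Iff.rfl

/-- A car crosses the bond from `i` to `i + 1` during one step of `fukuiIshibashi m`. -/
def Crosses (m : ℕ) (s : ℤ → Bool) (i : ℤ) : Prop :=
  s (i + 1) = false ∧ numCars s (i + 1 - m) m ≠ 0

noncomputable def flux (m : ℕ) (s : ℤ → Bool) (i : ℤ) : ℕ :=
  if Crosses m s i then 1 else 0

lemma crosses_iff {i : ℤ} :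
    Crosses m s i ↔ s (i + 1) = false ∧ ∃ p, i + 1 - m ≤ p ∧ p ≤ i ∧ s p = true := by
  simp only [Crosses, ne_eq, numCars_eq_zero_iff, not_forall, Bool.not_eq_false]
  refine and_congr_right fun _ => exists_congr fun p => ?_
  constructor
  · rintro ⟨h₁, h₂, h₃⟩; exact ⟨h₁, by omega, h₃⟩
  · rintro ⟨h₁, h₂, h₃⟩; exact ⟨h₁, by omega, h₃⟩

lemma fukuiIshibashi_eq_true_iff_of_eq_false {i : ℤ} (hs : s i = false) :
    fukuiIshibashi m s i = true ↔ Crosses m s (i - 1) ∧ ¬ Crosses m s i := by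
  simp only [fukuiIshibashi, hs, crosses_iff, sub_add_cancel, Bool.false_eq_true, false_and,
    true_and, false_or, Bool.ite_eq_true_distrib, if_false_right, and_true, not_and,
    not_exists, Bool.not_eq_true]
  constructor
  · rintro ⟨j, hj₁, hjm, hcar, hzero, hlast⟩
    refine ⟨⟨i - j, by omega, by omega, hcar⟩, fun hs₁ p hp₁ hp₂ => ?_⟩
    have hj : j = m := hlast.resolve_right (by simp [hs₁])
    rcases eq_or_lt_of_le hp₂ with rfl | hp
    · exact hs
    · have := hzero (i - p).toNat (by omega) (by omega)
      rwa [show i - (i - p).toNat = p by omega] at this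
  · rintro ⟨⟨p, hp₁, hp₂, hcar⟩, hnot⟩
    have hex : ∃ j : ℕ, 1 ≤ j ∧ s (i - j) = true :=
      ⟨(i - p).toNat, by omega, by rwa [show i - (i - p).toNat = p by omega]⟩
    obtain ⟨hj₁, hjcar⟩ := Nat.find_spec hex
    have hjle : Nat.find hex ≤ (i - p).toNat :=
      Nat.find_min' hex ⟨by omega, by rwa [show i - (i - p).toNat = p by omega]⟩
    refine ⟨Nat.find hex, hj₁, by omega, hjcar, fun k hk₁ hk₂ => ?_, ?_⟩
    · simpa [hk₁] using Nat.find_min hex hk₂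
    · by_contra! h
      have := hnot (by simpa using h.2) (i - Nat.find hex) (by omega) (by omega)
      simp [hjcar] at this

lemma crosses_sub_one_of_crosses {i : ℤ} (hs : s i = false) (h : Crosses m s i) :
    Crosses m s (i - 1) := by
  obtain ⟨-, p, hp₁, hp₂, hcar⟩ := crosses_iff.1 h
  have hpi : p ≠ i := by rintro rfl; simp [hs] at hcar
  exact crosses_iff.2 ⟨by simpa using hs, p, by omega, by omega, hcar⟩

lemma toNat_fukuiIshibashi_add_flux (hm : 1 ≤ m) (s : ℤ → Bool) (i : ℤ) :
    (fukuiIshibashi m s i).toNat + flux m s i = (s i).toNat + flux m s (i - 1) := by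
  cases hs : s i
  · have hF := fukuiIshibashi_eq_true_iff_of_eq_false (m := m) hs
    have hmono := crosses_sub_one_of_crosses (m := m) hs
    by_cases h₁ : Crosses m s i <;> by_cases h₀ : Crosses m s (i - 1) <;>
      simp_all [flux]
  · have hin : ¬ Crosses m s (i - 1) := fun h => by simp [crosses_iff, hs] at h
    have hout : Crosses m s i ↔ s (i + 1) = false :=
      ⟨And.left, fun h => crosses_iff.2 ⟨h, i, by omega, le_rfl, hs⟩⟩
    cases hs₁ : s (i + 1) <;> simp_all [flux, fukuiIshibashi]

lemma numCars_fukuiIshibashi_add_flux (hm : 1 ≤ m) (s : ℤ → Bool) (l : ℤ) (n : ℕ) :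
    numCars (fukuiIshibashi m s) l n + flux m s (l + n - 1) =
      numCars s l n + flux m s (l - 1) := by
  induction n with
  | zero => simp [numCars_zero]
  | succ n ih =>
    have h := toNat_fukuiIshibashi_add_flux hm s (l + n)
    rw [numCars_succ, numCars_succ, Nat.cast_succ, ← add_assoc, add_sub_cancel_right]
    omega

lemma flux_le_one (m : ℕ) (s : ℤ → Bool) (i : ℤ) : flux m s i ≤ 1 := by
  unfold flux; split_ifs <;> omega

lemma numCars_eq_zero_of_isBallot {N n : ℕ} (h : IsBallot m (window s a N)) (hnm : n ≤ m + 1)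
    (hnN : n ≤ N) : numCars s a n = 0 := by
  cases n with
  | zero => rfl
  | succ n =>
    have := isBallot_window_iff.1 h n hnN
    by_contra hne
    nlinarith [Nat.pos_of_ne_zero hne]

lemma isBallot_window_of_forall_car {N : ℕ}
    (h : ∀ n < N, s (a + n) = true → (m + 1) * numCars s a (n + 1) ≤ n) :
    IsBallot m (window s a N) := by
  refine isBallot_window_iff.2 fun n hn => ?_
  induction n with
  | zero =>
    cases hcar : s (a + (0 : ℕ))
    · simp_all [numCars_succ, numCars_zero]
    · exact h 0 hn hcar
  | succ n ih =>
    cases hcar : s (a + (n + 1 : ℕ))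
    · rw [numCars_succ, hcar, Bool.toNat_false, add_zero]
      linarith [ih (by omega)]
    · exact h _ hn hcar

lemma numCars_fukuiIshibashi_add_flux_of_vacant (hm : 1 ≤ m) (hz : numCars s a (m + 1) = 0)
    (n : ℕ) :
    numCars (fukuiIshibashi m s) (a + m) n + flux m s (a + m + n - 1) = numCars s a (m + n) := by
  have hzm : numCars s a m = 0 := by rw [numCars_succ] at hz; omega
  have hin : flux m s (a + m - 1) = 0 := by
    simp [flux, Crosses, hzm]
  rw [numCars_fukuiIshibashi_add_flux hm, hin, numCars_add, hzm, zero_add, add_zero]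

lemma numCars_eq_zero_of_isBallot_fukuiIshibashi (hm : 1 ≤ m) {N : ℕ} (hN : m + 1 ≤ N)
    (h : IsBallot m (window (fukuiIshibashi m s) (a + m) N)) : numCars s a (m + 1) = 0 := by
  have hF := numCars_eq_zero_of_isBallot h le_rfl hN
  rw [show m + 1 = 1 + m from add_comm _ _, numCars_add, Nat.cast_one] at hF
  have h₁ := numCars_fukuiIshibashi_add_flux hm s (a + m) 1
  have h₂ := numCars_fukuiIshibashi_add_flux hm s (a + m + 1) m
  simp only [Nat.cast_one, add_sub_cancel_right] at h₁ h₂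
  -- A car crossing into the cells `a + m + 1, …, a + 2m`, which are empty in `F_m s`, would have
  -- to cross out of them again, and that needs a car of `s` among them.
  have hout : flux m s (a + m) = 0 := by
    by_contra hne
    have hcross : Crosses m s (a + m + 1 + m - 1) := by
      by_contra hnc
      have : flux m s (a + m + 1 + m - 1) = 0 := if_neg hnc
      omega
    have hcars : numCars s (a + m + 1) m ≠ 0 := by
      simpa [show a + m + 1 + m - 1 + 1 - m = a + m + 1 by ring] using hcross.2
    have := flux_le_one m s (a + m + 1 + m - 1)
    omega
  have hin : flux m s (a + m - 1) = 0 := by linarith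
  have hlast : s (a + m) = false := by
    simpa [numCars_succ, numCars_zero] using (show numCars s (a + m) 1 = 0 by omega)
  have hfirst : numCars s a m = 0 := by
    by_contra hne
    have : Crosses m s (a + m - 1) :=
      ⟨by simpa using hlast, by simpa [show a + m - 1 + 1 - m = a by ring] using hne⟩
    simp [flux, this] at hin
  rw [numCars_succ, hfirst, hlast, Bool.toNat_false]

lemma isBallot_fukuiIshibashi_iff (hm : 1 ≤ m) {N : ℕ} (hN : m + 1 ≤ N) :
    IsBallot m (window (fukuiIshibashi m s) (a + m) N) ↔ IsBallot m (window s a (N + m + 1)) := by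
  constructor
  · intro h
    have hz := numCars_eq_zero_of_isBallot_fukuiIshibashi hm hN h
    refine isBallot_window_of_forall_car fun n hn hcar => ?_
    obtain ⟨k, rfl⟩ : ∃ k, n = m + k + 1 := by
      refine ⟨n - m - 1, ?_⟩
      by_contra hlt
      have := numCars_eq_zero_iff.1 hz (a + n) (by omega) (by omega)
      simp [hcar] at this
    have hstep := numCars_fukuiIshibashi_add_flux_of_vacant hm hz (k + 1)
    have hout : flux m s (a + m + (k + 1 : ℕ) - 1) = 0 := by
      rw [flux, if_neg]
      rintro ⟨hempty, -⟩
      rw [show a + m + (k + 1 : ℕ) - 1 + 1 = a + (m + k + 1 : ℕ) by push_cast; ring,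
        hcar] at hempty
      exact Bool.noConfusion hempty
    have hF := isBallot_window_iff.1 h k (by omega)
    rw [numCars_succ, hcar, Bool.toNat_true, show m + k + 1 = m + (k + 1) by ring, ← hstep, hout]
    nlinarith
  · intro h
    have hz := numCars_eq_zero_of_isBallot h le_rfl (by omega)
    rw [isBallot_window_iff]
    intro n hn
    have hstep := numCars_fukuiIshibashi_add_flux_of_vacant hm hz (n + 1)
    have hnext := numCars_succ s a (m + n + 1)
    have hb₀ := isBallot_window_iff.1 h n (by omega)
    have hb₁ := isBallot_window_iff.1 h (m + n) (by omega)
    have hb₂ := isBallot_window_iff.1 h (m + n + 1) (by omega)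
    have hidx : a + m + (n + 1 : ℕ) - 1 = a + (m + n : ℕ) := by push_cast; ring
    rw [hidx, ← add_assoc] at hstep
    by_cases hcross : Crosses m s (a + (m + n : ℕ))
    · simp only [flux, hcross, if_true] at hstep
      rw [← hstep] at hb₁
      linarith
    · simp only [flux, hcross, if_false, add_zero] at hstep
      rw [Crosses, not_and_or, Bool.not_eq_false, not_not] at hcross
      rcases hcross with hcar | hempty
      · rw [show a + (m + n + 1 : ℕ) = a + (m + n : ℕ) + 1 by push_cast; ring, hcar,
          Bool.toNat_true] at hnext
        rw [hnext, ← hstep] at hb₂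
        linarith
      · have := numCars_add s a (n + 1) m
        rw [show a + (m + n : ℕ) + 1 - m = a + (n + 1 : ℕ) by push_cast; ring] at hempty
        rw [hempty, add_zero, show n + 1 + m = m + n + 1 by ring] at this
        nlinarith

lemma iterate_fukuiIshibashi_eq_false_iff (hm : 1 ≤ m) (t : ℕ) (s : ℤ → Bool) :
    (∀ r : ℕ, r ≤ m → (fukuiIshibashi m)^[t] s r = false) ↔
      IsBallot m (window s (-(m * t : ℕ)) ((m + 1) * (t + 1))) := by
  induction t generalizing s with
  | zero =>
    simp only [Function.iterate_zero, id_eq, mul_zero, Nat.cast_zero, neg_zero]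
    rw [show (m + 1) * (0 + 1) = m + 1 by ring]
    constructor
    · intro h
      rw [isBallot_window_iff]
      intro n hn
      have : numCars s 0 (n + 1) = 0 := numCars_eq_zero_iff.2 fun p hp₁ hp₂ => by
        have := h p.toNat (by omega)
        rwa [show (p.toNat : ℤ) = p by omega] at this
      simp [this]
    · intro h r hr
      exact numCars_eq_zero_iff.1 (numCars_eq_zero_of_isBallot h le_rfl le_rfl) r (by omega)
        (by omega)
  | succ t ih =>
    rw [Function.iterate_succ_apply, ih,
      show (-(m * t : ℕ) : ℤ) = -(m * (t + 1) : ℕ) + m by push_cast; ring,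
      isBallot_fukuiIshibashi_iff hm (by nlinarith),
      show (m + 1) * (t + 1) + m + 1 = (m + 1) * (t + 1 + 1) by ring]

end Dynamics

section Measure

variable {N : ℕ}

lemma prod_ite_eq_pow_ones {M : Type*} [CommMonoid M] (w : Fin N → Bool) (x y : M) :
    ∏ i, (if w i then x else y) = x ^ ones w * y ^ (N - ones w) := by
  have hones : ones w = #{i | w i = true} := by
    rw [ones, card_filter]
    exact sum_congr rfl fun i _ => by cases w i <;> rfl
  have hcard := card_filter_add_card_filter_not (s := univ) fun i => w i = true
  rw [prod_ite, prod_const, prod_const, hones]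
  congr
  simp only [card_univ, Fintype.card_fin] at hcard
  omega

lemma IsBernoulli.measure_window_preimage_singleton {μ : Measure (ℤ → Bool)} {ρ : ℝ}
    (hber : IsBernoulli μ ρ) (a : ℤ) (w : Fin N → Bool) :
    μ ((window · a N) ⁻¹' {w}) = ∏ i, ENNReal.ofReal (if w i then ρ else 1 - ρ) := by
  let e : Fin N ↪ ℤ := ⟨fun i => a + i, fun i j h => by simpa [Fin.val_inj] using h⟩
  have hcyl : (window · a N) ⁻¹' {w} =
      {s | ∀ i ∈ univ.map e, s i = Function.extend e w (fun _ => false) i} := by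
    ext s
    simp only [Set.mem_preimage, Set.mem_singleton_iff, funext_iff, Set.mem_ofPred_eq, mem_map,
      mem_univ, true_and, forall_exists_index, forall_apply_eq_imp_iff, e.injective.extend_apply]
    rfl
  rw [hcyl, hber, prod_map]
  simp [e.injective.extend_apply]

lemma IsBernoulli.toReal_measure_window_preimage {μ : Measure (ℤ → Bool)} {ρ : ℝ}
    (hber : IsBernoulli μ ρ) (hρ : ρ ∈ Set.Icc (0 : ℝ) 1) (a : ℤ)
    (A : Finset (Fin N → Bool)) :
    (μ ((window · a N) ⁻¹' A)).toReal =
      ∑ w ∈ A, ρ ^ ones w * (1 - ρ) ^ (N - ones w) := by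
  have hmeas : Measurable (window · a N) := measurable_pi_lambda _ fun i => measurable_pi_apply _
  rw [← sum_measure_preimage_singleton A fun w _ => hmeas (measurableSet_singleton w),
    ENNReal.toReal_sum fun w _ => by
      simp [hber.measure_window_preimage_singleton, ENNReal.prod_ne_top]]
  refine sum_congr rfl fun w _ => ?_
  rw [hber.measure_window_preimage_singleton, ENNReal.toReal_prod, ← prod_ite_eq_pow_ones]
  refine prod_congr rfl fun i _ => ?_
  rw [ENNReal.toReal_ofReal]
  split_ifs <;> linarith [hρ.1, hρ.2]

end Measure

theorem prob_block_of_zeros_general (m t : ℕ) (hm : 1 ≤ m) (ρ : ℝ)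
    (hρ : ρ ∈ Set.Icc (0 : ℝ) 1)
    (μ : Measure (ℤ → Bool)) (hber : IsBernoulli μ ρ) :
    (μ {s | ∀ r : ℕ, r ≤ m → (fukuiIshibashi m)^[t] s (r : ℤ) = false}).toReal
      = ∑ j ∈ Finset.Icc 1 (t + 1),
          (j : ℝ) / (t + 1) * (Nat.choose ((m + 1) * (t + 1)) (t + 1 - j) : ℝ) *
            ρ ^ (t + 1 - j) * (1 - ρ) ^ (m * (t + 1) + j) := by
  have hevent : {s | ∀ r : ℕ, r ≤ m → (fukuiIshibashi m)^[t] s (r : ℤ) = false} =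
      (window · (-(m * t : ℕ)) ((m + 1) * (t + 1))) ⁻¹'
        ↑(univ.filter (IsBallot (N := (m + 1) * (t + 1)) m)) := by
    ext s
    simp [iterate_fukuiIshibashi_eq_false_iff hm]
  rw [hevent, hber.toReal_measure_window_preimage hρ,
    sum_isBallot_eq_sum_ballotCount t le_rfl fun k => ρ ^ k * (1 - ρ) ^ ((m + 1) * (t + 1) - k)]
  refine sum_nbij' (fun k => t + 1 - k) (fun j => t + 1 - j) ?_ ?_ ?_ ?_ ?_
  · intro k hk; simp only [mem_range, mem_Icc] at hk ⊢; omega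
  · intro j hj; simp only [mem_range, mem_Icc] at hj ⊢; omega
  · intro k hk; simp only [mem_range] at hk; omega
  · intro j hj; simp only [mem_Icc] at hj; omega
  · intro k hk
    have hk : k ≤ t := Nat.lt_succ_iff.1 (mem_range.1 hk)
    rw [nsmul_eq_mul, ballotCount_eq_div hk, Nat.sub_sub_self (by omega),
      show (m + 1) * (t + 1) - k = m * (t + 1) + (t + 1 - k) by rw [add_mul, one_mul]; omega]
    ring

/-- Starting from a Bernoulli(ρ) random configuration, the probability of a
block `0^{m+1}` at time `t` equals
`Σ_{j=1}^{t+1} (j/(t+1)) C((m+1)(t+1), t+1−j) ρ^{t+1−j} (1−ρ)^{m(t+1)+j}`. -/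
theorem prob_block_of_zeros (m t : ℕ) (hm : 1 ≤ m) (ρ : ℝ)
    (hρ : ρ ∈ Set.Icc (0 : ℝ) 1)
    (μ : Measure (ℤ → Bool)) [IsProbabilityMeasure μ] (hber : IsBernoulli μ ρ) :
    (μ {s | ∀ r : ℕ, r ≤ m → (fukuiIshibashi m)^[t] s (r : ℤ) = false}).toReal
      = ∑ j ∈ Finset.Icc 1 (t + 1),
          (j : ℝ) / (t + 1) * (Nat.choose ((m + 1) * (t + 1)) (t + 1 - j) : ℝ) *
            ρ ^ (t + 1 - j) * (1 - ρ) ^ (m * (t + 1) + j) :=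
  prob_block_of_zeros_general m t hm ρ hρ μ hber
end

section
/- Let m ≥ 1 be an integer and let ρ ∈ (0,1). Define S_t = Σ_{j=1}^{t+1} (j/(t+1)) · C((m+1)(t+1), t+1−j) · ρ^{t+1−j} (1−ρ)^{m(t+1)+j} for each integer t ≥ 0, where C denotes the binomial coefficient. Then the sequence (S_t) converges as t → ∞, and lim_{t→∞} S_t = 1 − (m+1)ρ if ρ < 1/(m+1), and lim_{t→∞} S_t = 0 if ρ ≥ 1/(m+1); equivalently, lim_{t→∞} S_t = max(1 − (m+1)ρ, 0). -/
/-!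
Put `N = (m + 1) n` with `n = t + 1`. Reflecting `j ↦ n - j` turns `S_t` into
`∑ k, C(N, k) ρ^k (1 - ρ)^(N - k) max (1 - (m + 1) k / N) 0`, the `N`-th Bernstein approximation
of `x ↦ max (1 - (m + 1) x) 0` at `ρ`. Bernstein approximations of a continuous function on
`[0, 1]` converge to it uniformly, so `S_t → max (1 - (m + 1) ρ) 0`.
-/

open Filter Finset
open scoped unitInterval

noncomputable def ramp (c : ℝ) : C(I, ℝ) := ⟨fun x => max (1 - c * x) 0, by fun_prop⟩

theorem sum_Icc_eq_sum_range_bernstein (m n : ℕ) (x : I) :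
    ∑ j ∈ Icc 1 n, (j : ℝ) / n * ((m + 1) * n).choose (n - j) * (x : ℝ) ^ (n - j) *
        (1 - (x : ℝ)) ^ (m * n + j) =
      ∑ k ∈ range n, bernstein ((m + 1) * n) k x * (1 - k / n) := by
  have reflect := sum_Ico_reflect (fun k => bernstein ((m + 1) * n) k x * (1 - k / n)) 1
    (le_refl (n + 1))
  rw [Nat.add_sub_cancel, Nat.sub_self, Nat.Ico_zero_eq_range, Ico_add_one_right_eq_Icc] at reflect
  rw [← reflect]
  refine sum_congr rfl fun j hj => ?_
  obtain ⟨hj1, hjn⟩ := mem_Icc.1 hj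
  have hexp : (m + 1) * n - (n - j) = m * n + j := by
    rw [add_mul, one_mul]; omega
  have hn : (n : ℝ) ≠ 0 := Nat.cast_ne_zero.2 (by omega)
  rw [bernstein_apply, hexp, Nat.cast_sub hjn]
  field_simp
  ring

theorem bernsteinApproximation_ramp_apply (m n : ℕ) (hn : n ≠ 0) (x : I) :
    bernsteinApproximation ((m + 1) * n) (ramp (m + 1)) x =
      ∑ k ∈ range n, bernstein ((m + 1) * n) k x * (1 - k / n) := by
  set N := (m + 1) * n
  have ramp_z (k : Fin (N + 1)) : ramp (m + 1) (bernstein.z k) = max (1 - (k : ℝ) / n) 0 := by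
    simp only [ramp, bernstein.z, ContinuousMap.coe_mk, N]
    push_cast
    field_simp
  have hsupp : range n ⊆ range (N + 1) :=
    range_subset_range.2 (Nat.le_succ_of_le (Nat.le_mul_of_pos_left n m.succ_pos))
  rw [bernsteinApproximation.apply]
  simp_rw [ramp_z, smul_eq_mul]
  rw [Fin.sum_univ_eq_sum_range (fun k => bernstein N k x * max (1 - (k : ℝ) / n) 0),
    ← sum_subset hsupp]
  · refine sum_congr rfl fun k hk => ?_
    have : (k : ℝ) / n ≤ 1 :=
      div_le_one_of_le₀ (by exact_mod_cast (mem_range.1 hk).le) (by positivity)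
    rw [max_eq_left (by linarith)]
  · intro k _ hk
    have : 1 ≤ (k : ℝ) / n := by
      rw [one_le_div₀ (by positivity)]; exact_mod_cast not_lt.1 (mem_range.not.1 hk)
    rw [max_eq_right (by linarith), mul_zero]

theorem tendsto_prob_block_general (m : ℕ) (ρ : ℝ) (hρ : ρ ∈ Set.Ioo (0 : ℝ) 1) :
    Tendsto (fun t : ℕ =>
        ∑ j ∈ Finset.Icc 1 (t + 1),
          (j : ℝ) / (t + 1) * (Nat.choose ((m + 1) * (t + 1)) (t + 1 - j) : ℝ) *
            ρ ^ (t + 1 - j) * (1 - ρ) ^ (m * (t + 1) + j))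
      atTop (nhds (max (1 - (m + 1) * ρ) 0)) := by
  let x : I := ⟨ρ, Set.Ioo_subset_Icc_self hρ⟩
  have hS (t : ℕ) : ∑ j ∈ Icc 1 (t + 1),
      (j : ℝ) / (t + 1) * ((m + 1) * (t + 1)).choose (t + 1 - j) * ρ ^ (t + 1 - j) *
        (1 - ρ) ^ (m * (t + 1) + j) =
      bernsteinApproximation ((m + 1) * (t + 1)) (ramp (m + 1)) x := by
    rw [bernsteinApproximation_ramp_apply m _ t.succ_ne_zero, ← sum_Icc_eq_sum_range_bernstein]
    push_cast
    rfl
  have hN : Tendsto (fun t : ℕ => (m + 1) * (t + 1)) atTop atTop :=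
    tendsto_atTop_mono (fun t => Nat.le_mul_of_pos_left _ m.succ_pos) (tendsto_add_atTop_nat 1)
  simp_rw [hS]
  exact ((continuous_eval_const x).tendsto _).comp ((bernsteinApproximation_uniform _).comp hN)

/-- The sums `S_t = Σ_{j=1}^{t+1} (j/(t+1)) C((m+1)(t+1), t+1−j) ρ^{t+1−j} (1−ρ)^{m(t+1)+j}`
converge, as `t → ∞`, to `max(1 − (m+1)ρ, 0)`. -/
theorem tendsto_prob_block (m : ℕ) (hm : 1 ≤ m) (ρ : ℝ) (hρ : ρ ∈ Set.Ioo (0 : ℝ) 1) :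
    Tendsto (fun t : ℕ =>
        ∑ j ∈ Finset.Icc 1 (t + 1),
          (j : ℝ) / (t + 1) * (Nat.choose ((m + 1) * (t + 1)) (t + 1 - j) : ℝ) *
            ρ ^ (t + 1 - j) * (1 - ρ) ^ (m * (t + 1) + j))
      atTop (nhds (max (1 - (m + 1) * ρ) 0)) :=
  tendsto_prob_block_general m ρ hρ
end

section
/- Let m ≥ 1 be an integer and let ρ ∈ (0,1). Define the flow at time t by φ_m(t) = 1 − ρ − Σ_{j=1}^{t+1} (j/(t+1)) · C((m+1)(t+1), t+1−j) · ρ^{t+1−j} (1−ρ)^{m(t+1)+j}, where C denotes the binomial coefficient. Then lim_{t→∞} φ_m(t) = m·ρ if ρ < 1/(m+1) and lim_{t→∞} φ_m(t) = 1 − ρ otherwise; equivalently, lim_{t→∞} φ_m(t) = min(m·ρ, 1 − ρ). (This is the steady-state fundamental diagram of the deterministic Fukui–Ishibashi model.) -/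
/-!
Substituting `k = t + 1 - j`, the sum in the flow is the `N`-th Bernstein approximation, with
`N = (m + 1)(t + 1)`, of the hinge function `f x = max (1 - (m + 1) x) 0` evaluated at `ρ`: the
weight `j / (t + 1) = 1 - k / (t + 1)` is `f (k / N)`, and `f` vanishes at the nodes `k / N` with
`k > t`. Bernstein approximations converge uniformly (Weierstrass), so the flow tends to
`1 - ρ - max (1 - (m + 1) ρ) 0 = min (m ρ) (1 - ρ)`.
-/

open Filter Finset unitInterval

noncomputable def hinge (c : ℝ) : C(I, ℝ) :=
  ⟨fun x => max (1 - c * x) 0, by fun_prop⟩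

lemma hinge_apply (c : ℝ) (x : I) : hinge c x = max (1 - c * x) 0 := rfl

lemma one_sub_sub_hinge_apply (c : ℝ) (x : I) :
    1 - x - hinge (c + 1) x = min (c * x) (1 - x) := by
  rw [hinge_apply, ← min_sub_sub_left]
  congr 1 <;> ring

theorem tendsto_bernsteinApproximation_apply {E : Type*} [AddCommGroup E] [TopologicalSpace E]
    [IsTopologicalAddGroup E] [Module ℝ E] [ContinuousSMul ℝ E] [LocallyConvexSpace ℝ E]
    {u : ℕ → ℕ} (hu : Tendsto u atTop atTop) (f : C(I, E)) (x : I) :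
    Tendsto (fun t => bernsteinApproximation (u t) f x) atTop (nhds (f x)) :=
  ((continuous_eval_const x).tendsto f).comp
    ((bernsteinApproximation_uniform f).comp hu)

theorem sum_Icc_eq_bernsteinApproximation_hinge (m t : ℕ) (x : I) :
    ∑ j ∈ Icc 1 (t + 1),
        (j : ℝ) / (t + 1) * (Nat.choose ((m + 1) * (t + 1)) (t + 1 - j) : ℝ) *
          (x : ℝ) ^ (t + 1 - j) * (1 - (x : ℝ)) ^ (m * (t + 1) + j)
      = bernsteinApproximation ((m + 1) * (t + 1)) (hinge (m + 1)) x := by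
  set N := (m + 1) * (t + 1)
  have ht : (0 : ℝ) < t + 1 := by positivity
  set g : ℕ → ℝ := fun k =>
    max (1 - (k : ℝ) / (t + 1)) 0 * ((N.choose k : ℝ) * (x : ℝ) ^ k * (1 - (x : ℝ)) ^ (N - k))
  have hnode (k : ℕ) : (m + 1 : ℝ) * (k / N) = k / (t + 1) := by
    simp only [N]; push_cast; field_simp
  have hbern : bernsteinApproximation N (hinge (m + 1)) x = ∑ k ∈ range (N + 1), g k := by
    rw [bernsteinApproximation.apply, ← Fin.sum_univ_eq_sum_range g]
    refine sum_congr rfl fun k _ => ?_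
    rw [smul_eq_mul, bernstein_apply, hinge_apply, mul_comm]
    change max (1 - (m + 1 : ℝ) * ((k : ℕ) / N)) 0 * _ = _
    rw [hnode]
  have hvanish : ∑ k ∈ range (t + 1), g k = ∑ k ∈ range (N + 1), g k := by
    refine sum_subset (fun k hk => ?_) fun k _ hk => ?_
    · have : t + 1 ≤ N := Nat.le_mul_of_pos_left _ m.succ_pos
      simp only [mem_range] at hk ⊢; omega
    · have hk' : (t + 1 : ℝ) ≤ k := by exact_mod_cast not_lt.mp (mem_range.not.mp hk)
      have : 1 - (k : ℝ) / (t + 1) ≤ 0 := by rw [sub_nonpos, le_div_iff₀ ht]; linarith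
      simp only [g, max_eq_right this, zero_mul]
  rw [hbern, ← hvanish]
  refine sum_nbij' (fun j => t + 1 - j) (fun k => t + 1 - k) ?_ ?_ ?_ ?_ fun j hj => ?_
  iterate 4 (intro i hi; simp only [mem_Icc, mem_range] at hi ⊢; omega)
  obtain ⟨hj1, hjt⟩ := mem_Icc.mp hj
  have hweight : (j : ℝ) / (t + 1) = max (1 - ((t + 1 - j : ℕ) : ℝ) / (t + 1)) 0 := by
    have hj1' : (1 : ℝ) ≤ j := by exact_mod_cast hj1
    rw [Nat.cast_sub hjt, max_eq_left] <;> push_cast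
    · field_simp; ring
    · rw [sub_nonneg, div_le_one ht]; linarith
  have hexp : m * (t + 1) + j = N - (t + 1 - j) := by simp only [N]; rw [add_one_mul]; omega
  simp only [g, hweight, hexp]
  ring

theorem tendsto_flow_general (m : ℕ) (ρ : ℝ) (hρ : ρ ∈ Set.Ioo (0 : ℝ) 1) :
    Tendsto (fun t : ℕ =>
        1 - ρ - ∑ j ∈ Finset.Icc 1 (t + 1),
          (j : ℝ) / (t + 1) * (Nat.choose ((m + 1) * (t + 1)) (t + 1 - j) : ℝ) *
            ρ ^ (t + 1 - j) * (1 - ρ) ^ (m * (t + 1) + j))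
      atTop (nhds (min ((m : ℝ) * ρ) (1 - ρ))) := by
  let x : I := ⟨ρ, Set.Ioo_subset_Icc_self hρ⟩
  have hN : Tendsto (fun t : ℕ => (m + 1) * (t + 1)) atTop atTop :=
    tendsto_id.const_mul_atTop' m.succ_pos |>.comp (tendsto_add_atTop_nat 1)
  have hlimit : 1 - ρ - hinge (m + 1) x = min ((m : ℝ) * ρ) (1 - ρ) :=
    one_sub_sub_hinge_apply m x
  rw [← hlimit]
  refine (tendsto_const_nhds.sub (tendsto_bernsteinApproximation_apply hN _ x)).congr
    fun t => ?_
  rw [← sum_Icc_eq_bernsteinApproximation_hinge]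

/-- Steady-state fundamental diagram: the flow
`φ_m(t) = 1 − ρ − Σ_{j=1}^{t+1} (j/(t+1)) C((m+1)(t+1), t+1−j) ρ^{t+1−j} (1−ρ)^{m(t+1)+j}`
tends, as `t → ∞`, to `min(mρ, 1 − ρ)`. -/
theorem tendsto_flow (m : ℕ) (hm : 1 ≤ m) (ρ : ℝ) (hρ : ρ ∈ Set.Ioo (0 : ℝ) 1) :
    Tendsto (fun t : ℕ =>
        1 - ρ - ∑ j ∈ Finset.Icc 1 (t + 1),
          (j : ℝ) / (t + 1) * (Nat.choose ((m + 1) * (t + 1)) (t + 1 - j) : ℝ) *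
            ρ ^ (t + 1 - j) * (1 - ρ) ^ (m * (t + 1) + j))
      atTop (nhds (min ((m : ℝ) * ρ) (1 - ρ))) :=
  tendsto_flow_general m ρ hρ
end

section
/- Let m ≥ 1 and t ≥ 0 be integers and let ρ ∈ (0,1). Then Σ_{j=1}^{t+1} (j/(t+1)) · C((m+1)(t+1), t+1−j) · ρ^{t+1−j} (1−ρ)^{m(t+1)+j} = [(1−ρ)^{1+m+mt} · ρ^{t} · (1+m+t+mt)! / ((1+m+mt) · (1+t)! · (m+mt)!)] · Σ_{k=0}^{t} [(2)_k · (−t)_k / ((2+m+mt)_k · k!)] · (1 − 1/ρ)^k, where C denotes the binomial coefficient and (x)_k = x(x+1)⋯(x+k−1) denotes the ascending Pochhammer symbol (with (x)₀ = 1), so that the right-hand inner sum is the terminating hypergeometric series ₂F₁(2, −t; 2+m+mt; 1 − 1/ρ). -/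
/-!
Substituting `j = k + 1`, the two sums agree term by term. In factorials, `(2)_k = (k+1)!`,
`(M+1)_k = (M+k)!/M!` and `(-t)_k = (-1)^k t!/(t-k)!`, and the sign `(-1)^k` cancels against
`(1 - 1/ρ)^k = (-1)^k ((1-ρ)/ρ)^k`; what remains is the binomial term
`C(M+t, t-k) ρ^(t-k) (1-ρ)^(M+k)` with `M = 1 + m + mt`.
-/

/-- Ascending Pochhammer symbol `(x)_k = x(x+1)⋯(x+k−1)` in the reals. -/
noncomputable def poch (x : ℝ) (k : ℕ) : ℝ := ∏ i ∈ Finset.range k, (x + i)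

open Nat Polynomial

theorem poch_eq_ascPochhammer_eval (x : ℝ) (k : ℕ) : poch x k = (ascPochhammer ℝ k).eval x := by
  induction k with
  | zero => simp [poch]
  | succ k ih => rw [poch, Finset.prod_range_succ, ← poch, ih, ascPochhammer_succ_eval]

theorem factorial_mul_poch_natCast_add_one (n k : ℕ) : (n ! : ℝ) * poch (n + 1) k = (n + k)! := by
  rw [poch_eq_ascPochhammer_eval, factorial_mul_ascPochhammer]

theorem poch_two (k : ℕ) : poch 2 k = (k + 1)! := by
  simpa [add_comm k, one_add_one_eq_two] using factorial_mul_poch_natCast_add_one 1 k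

theorem poch_neg_natCast (t k : ℕ) : poch (-t) k = (-1) ^ k * t.descFactorial k := by
  rw [poch_eq_ascPochhammer_eval, ascPochhammer_eval_neg_eq_descPochhammer,
    descPochhammer_eval_eq_descFactorial]

theorem hypergeometric_summand_eq (n t k : ℕ) {ρ : ℝ} (hρ : ρ ≠ 0) :
    poch 2 k * poch (-t) k / (poch ((n + 2 : ℕ) : ℝ) k * k !) * (1 - 1 / ρ) ^ k
      = (k + 1) * t.descFactorial k * (n + 1)! / (n + 1 + k)! * ((1 - ρ) / ρ) ^ k := by
  have hsign : ((-1 : ℝ) ^ k) ^ 2 = 1 := by rw [← pow_mul, mul_comm, pow_mul, neg_one_sq, one_pow]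
  have hbase : (1 - 1 / ρ) = -1 * ((1 - ρ) / ρ) := by field_simp; ring
  have hfac := factorial_mul_poch_natCast_add_one (n + 1) k
  push_cast at hfac ⊢
  rw [add_assoc (n : ℝ), one_add_one_eq_two] at hfac
  rw [poch_two, poch_neg_natCast, hbase, mul_pow, ← hfac, Nat.factorial_succ k]
  have hp : poch (n + 2) k ≠ 0 := by
    intro h; rw [h, mul_zero] at hfac; exact absurd hfac.symm (by positivity)
  push_cast
  field_simp
  rw [hsign, one_mul]

theorem prefactor_mul_hypergeometric_summand_eq (n t k : ℕ) (hk : k ≤ t) {ρ : ℝ} (hρ : ρ ≠ 0) :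
    (1 - ρ) ^ (n + 1) * ρ ^ t * (n + 1 + t)! / ((n + 1 : ℕ) * (t + 1)! * n !) *
      (poch 2 k * poch (-t) k / (poch ((n + 2 : ℕ) : ℝ) k * k !) * (1 - 1 / ρ) ^ k)
    = (k + 1) / (t + 1) * ((n + 1 + t).choose (t - k)) * ρ ^ (t - k) * (1 - ρ) ^ (n + 1 + k) := by
  obtain ⟨d, rfl⟩ := Nat.exists_eq_add_of_le hk
  have hdesc : ((k + d).descFactorial k : ℝ) = (k + d)! / d ! := by
    rw [eq_div_iff (by positivity), mul_comm]
    exact_mod_cast (by simpa using Nat.factorial_mul_descFactorial (Nat.le_add_right k d))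
  rw [hypergeometric_summand_eq n _ k hρ, hdesc, Nat.add_sub_cancel_left,
    Nat.cast_choose ℝ (by omega : d ≤ n + 1 + (k + d)), show n + 1 + (k + d) - d = n + 1 + k by omega,
    Nat.factorial_succ (k + d), Nat.factorial_succ n, pow_add ρ, pow_add (1 - ρ), div_pow]
  push_cast
  field_simp
  ring

theorem prob_block_eq_hypergeometric_general (m t : ℕ) (ρ : ℝ)
    (hρ : ρ ∈ Set.Ioo (0 : ℝ) 1) :
    (∑ j ∈ Finset.Icc 1 (t + 1),
        (j : ℝ) / (t + 1) * (Nat.choose ((m + 1) * (t + 1)) (t + 1 - j) : ℝ) *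
          ρ ^ (t + 1 - j) * (1 - ρ) ^ (m * (t + 1) + j))
    = (1 - ρ) ^ (1 + m + m * t) * ρ ^ t *
        (Nat.factorial (1 + m + t + m * t) : ℝ) /
        (((1 + m + m * t : ℕ) : ℝ) * (Nat.factorial (1 + t) : ℝ) *
          (Nat.factorial (m + m * t) : ℝ)) *
      ∑ k ∈ Finset.range (t + 1),
        poch 2 k * poch (-(t : ℝ)) k /
          (poch (((2 + m + m * t : ℕ) : ℝ)) k * (Nat.factorial k : ℝ)) *
          (1 - 1 / ρ) ^ k := by
  rw [Finset.mul_sum, ← Finset.Ico_add_one_right_eq_Icc, Finset.sum_Ico_eq_sum_range, Nat.add_sub_cancel]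
  refine Finset.sum_congr rfl fun k hk => ?_
  have hkt : k ≤ t := Finset.mem_range_succ_iff.mp hk
  rw [show (m + 1) * (t + 1) = m + m * t + 1 + t by ring, show t + 1 - (1 + k) = t - k by omega,
    show m * (t + 1) + (1 + k) = m + m * t + 1 + k by ring, show 1 + m + m * t = m + m * t + 1 by ring,
    show 1 + m + t + m * t = m + m * t + 1 + t by ring, show 2 + m + m * t = m + m * t + 2 by ring,
    add_comm 1 t, add_comm 1 k, Nat.cast_succ k]
  exact (prefactor_mul_hypergeometric_summand_eq (m + m * t) t k hkt hρ.1.ne').symm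

/-- The probability `P_t(0^{m+1})` expressed through the terminating
hypergeometric series `₂F₁(2, −t; 2+m+mt; 1 − 1/ρ)`. -/
theorem prob_block_eq_hypergeometric (m t : ℕ) (hm : 1 ≤ m) (ρ : ℝ)
    (hρ : ρ ∈ Set.Ioo (0 : ℝ) 1) :
    (∑ j ∈ Finset.Icc 1 (t + 1),
        (j : ℝ) / (t + 1) * (Nat.choose ((m + 1) * (t + 1)) (t + 1 - j) : ℝ) *
          ρ ^ (t + 1 - j) * (1 - ρ) ^ (m * (t + 1) + j))
    = (1 - ρ) ^ (1 + m + m * t) * ρ ^ t *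
        (Nat.factorial (1 + m + t + m * t) : ℝ) /
        (((1 + m + m * t : ℕ) : ℝ) * (Nat.factorial (1 + t) : ℝ) *
          (Nat.factorial (m + m * t) : ℝ)) *
      ∑ k ∈ Finset.range (t + 1),
        poch 2 k * poch (-(t : ℝ)) k /
          (poch (((2 + m + m * t : ℕ) : ℝ)) k * (Nat.factorial k : ℝ)) *
          (1 - 1 / ρ) ^ k :=
  prob_block_eq_hypergeometric_general m t ρ hρ
end

section
/- Let m ≥ 1 and L ≥ m+2 be integers and let s : ℤ/Lℤ → {0,1}. Then Σ_{i ∈ ℤ/Lℤ} (F_m s)(i) = Σ_{i ∈ ℤ/Lℤ} s(i); that is, the Fukui–Ishibashi cellular automaton on the cyclic lattice of L sites conserves the number of occupied sites (cars). -/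
open scoped Classical

/-- The Fukui–Ishibashi cellular automaton with maximum speed `m` on the cyclic
lattice of `L` sites. -/
noncomputable def fukuiIshibashiCyc (m L : ℕ) (s : ZMod L → Bool) : ZMod L → Bool :=
  fun i =>
    if (s i = true ∧ s (i + 1) = true) ∨
       (s i = false ∧ ∃ j : ℕ, 1 ≤ j ∧ j ≤ m ∧ s (i - (j : ZMod L)) = true ∧
          (∀ k : ℕ, 1 ≤ k → k < j → s (i - (k : ZMod L)) = false) ∧
          (j = m ∨ s (i + 1) = true))
    then true else false

/-- `j` is a witness that a car lands at site `i`. -/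
def fiWitness (m : ℕ) {L : ℕ} (s : ZMod L → Bool) (i : ZMod L) (j : ℕ) : Prop :=
  1 ≤ j ∧ j ≤ m ∧ s (i - (j : ZMod L)) = true ∧
    (∀ k : ℕ, 1 ≤ k → k < j → s (i - (k : ZMod L)) = false) ∧
    (j = m ∨ s (i + 1) = true)

lemma fiWitness_not_lt {m L : ℕ} {s : ZMod L → Bool} {i : ZMod L} {j j' : ℕ}
    (h : fiWitness m s i j) (h' : fiWitness m s i j') : ¬ j < j' := by
  intro hlt
  have hf := h'.2.2.2.1 j h.1 hlt
  rw [h.2.2.1] at hf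
  exact Bool.noConfusion hf

lemma fiWitness_unique {m L : ℕ} {s : ZMod L → Bool} {i : ZMod L} {j j' : ℕ}
    (h : fiWitness m s i j) (h' : fiWitness m s i j') : j = j' := by
  rcases Nat.lt_trichotomy j j' with hlt | heq | hgt
  · exact absurd hlt (fiWitness_not_lt h h')
  · exact heq
  · exact absurd hgt (fiWitness_not_lt h' h)

/-- The distance a car at `p` moves. -/
noncomputable def fiMove (m : ℕ) {L : ℕ} (s : ZMod L → Bool) (p : ZMod L) : ℕ :=
  if h : ∃ t : ℕ, 1 ≤ t ∧ t ≤ m ∧ s (p + (t : ZMod L)) = true then Nat.find h - 1 else m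

lemma zmod_cast_helper {L : ℕ} (p : ZMod L) {a b : ℕ} (h : b ≤ a) :
    (p + (a : ZMod L)) - (b : ZMod L) = p + ((a - b : ℕ) : ZMod L) := by
  rw [Nat.cast_sub h]; ring

/-- If a car at `p` has an empty site ahead, it lands at `p + fiMove m s p`
with witness `fiMove m s p`, and the landing site is empty. -/
lemma fiMove_lands {m L : ℕ} (hm : 1 ≤ m) {s : ZMod L → Bool} {p : ZMod L}
    (hp : s p = true) (hp1 : s (p + 1) = false) :
    s (p + (fiMove m s p : ZMod L)) = false ∧
      fiWitness m s (p + (fiMove m s p : ZMod L)) (fiMove m s p) := by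
  unfold fiMove
  split_ifs with h
  · -- there is a car ahead within distance m
    obtain ⟨hn1, hnm, hns⟩ := Nat.find_spec h
    set n := Nat.find h with hn
    have hn2 : 2 ≤ n := by
      by_contra h2
      have hne1 : n = 1 := by omega
      rw [hne1, Nat.cast_one, hp1] at hns
      exact Bool.noConfusion hns
    have hkey : ∀ t : ℕ, 1 ≤ t → t < n → s (p + (t : ZMod L)) = false := by
      intro t ht1 htn
      have := Nat.find_min h htn
      push_neg at this
      have := this ht1 (le_trans (le_of_lt htn) hnm)
      simpa using this
    have hd1 : 1 ≤ n - 1 := by omega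
    have hdm : n - 1 ≤ m := by omega
    refine ⟨?_, hd1, hdm, ?_, ?_, ?_⟩
    · exact hkey (n - 1) hd1 (by omega)
    · rw [add_sub_cancel_right]; exact hp
    · intro k hk1 hkd
      rw [zmod_cast_helper p (le_of_lt hkd)]
      exact hkey ((n - 1) - k) (by omega) (by omega)
    · right
      have : p + ((n - 1 : ℕ) : ZMod L) + 1 = p + (n : ZMod L) := by
        rw [Nat.cast_sub (by omega : 1 ≤ n)]; push_cast; ring
      rw [this]; exact hns
  · -- no car ahead within distance m
    push_neg at h
    refine ⟨?_, hm, le_refl m, ?_, ?_, Or.inl rfl⟩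
    · have := h m hm (le_refl m)
      simpa using this
    · rw [add_sub_cancel_right]; exact hp
    · intro k hk1 hkm
      rw [zmod_cast_helper p (le_of_lt hkm)]
      have := h (m - k) (by omega) (by omega)
      simpa using this

/-- Conversely, a landing witness at `i` determines a car at `p = i - j` that
moves exactly `j`. -/
lemma fiMove_eq_of_witness {m L : ℕ} {s : ZMod L → Bool} {i : ZMod L} {j : ℕ}
    (hi : s i = false) (hw : fiWitness m s i j) :
    s (i - (j : ZMod L)) = true ∧ s (i - (j : ZMod L) + 1) = false ∧
      fiMove m s (i - (j : ZMod L)) = j := by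
  obtain ⟨hj1, hjm, hsj, hall, hdisj⟩ := hw
  set p := i - (j : ZMod L) with hp
  have hpt : ∀ t : ℕ, (p + (t : ZMod L)) = i - ((j : ZMod L) - (t : ZMod L)) := by
    intro t; rw [hp]; ring
  have hC : ∀ t : ℕ, 1 ≤ t → t ≤ j → s (p + (t : ZMod L)) = false := by
    intro t ht1 htj
    rcases Nat.lt_or_ge t j with hlt | hge
    · have : p + (t : ZMod L) = i - ((j - t : ℕ) : ZMod L) := by
        rw [hpt, Nat.cast_sub (le_of_lt hlt)]
      rw [this]
      exact hall (j - t) (by omega) (by omega)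
    · have htj' : t = j := le_antisymm htj hge
      subst htj'
      have : p + (t : ZMod L) = i := by rw [hp]; ring
      rw [this]; exact hi
  have hp1 : s (p + 1) = false := by
    have : p + 1 = p + ((1 : ℕ) : ZMod L) := by push_cast; ring
    rw [this]; exact hC 1 le_rfl hj1
  refine ⟨hsj, hp1, ?_⟩
  unfold fiMove
  rcases Nat.lt_or_ge j m with hjlt | hjge
  · -- j < m, so s (i+1) = true
    have hi1 : s (i + 1) = true := by
      rcases hdisj with h | h
      · omega
      · exact h
    have hPj1 : 1 ≤ j + 1 ∧ j + 1 ≤ m ∧ s (p + ((j + 1 : ℕ) : ZMod L)) = true := by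
      refine ⟨by omega, by omega, ?_⟩
      have : p + ((j + 1 : ℕ) : ZMod L) = i + 1 := by rw [hp]; push_cast; ring
      rw [this]; exact hi1
    have hex : ∃ t : ℕ, 1 ≤ t ∧ t ≤ m ∧ s (p + (t : ZMod L)) = true := ⟨j + 1, hPj1⟩
    rw [dif_pos hex]
    have hfind : Nat.find hex = j + 1 := by
      rw [Nat.find_eq_iff]
      refine ⟨hPj1, ?_⟩
      intro t htlt
      rintro ⟨ht1, htm, hts⟩
      have := hC t ht1 (by omega)
      rw [hts] at this; exact Bool.noConfusion this
    omega
  · -- j = m : no car within distance m ahead of p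
    have hjm' : j = m := le_antisymm hjm hjge
    have hnex : ¬ ∃ t : ℕ, 1 ≤ t ∧ t ≤ m ∧ s (p + (t : ZMod L)) = true := by
      rintro ⟨t, ht1, htm, hts⟩
      have := hC t ht1 (by omega)
      rw [hts] at this; exact Bool.noConfusion this
    rw [dif_neg hnex]
    omega

/-- The Fukui–Ishibashi automaton on the cyclic lattice of `L ≥ m+2` sites
conserves the number of cars. -/
theorem fukuiIshibashiCyc_conserves (m L : ℕ) (hm : 1 ≤ m) (hL : m + 2 ≤ L)
    (s : ZMod L → Bool) :
    letI : NeZero L := ⟨by omega⟩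
    (∑ i : ZMod L, (if fukuiIshibashiCyc m L s i = true then 1 else 0 : ℤ))
      = ∑ i : ZMod L, (if s i = true then 1 else 0 : ℤ) := by
  haveI : NeZero L := ⟨by omega⟩
  -- lands / leaves predicates
  set lands : ZMod L → Prop := fun i => s i = false ∧ ∃ j : ℕ, fiWitness m s i j with hlands
  set leaves : ZMod L → Prop := fun p => s p = true ∧ s (p + 1) = false with hleaves
  have key : ∀ i : ZMod L,
      (if fukuiIshibashiCyc m L s i = true then (1 : ℤ) else 0)
        = (if s i = true then (1 : ℤ) else 0)
          + (if lands i then (1 : ℤ) else 0) - (if leaves i then (1 : ℤ) else 0) := by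
    intro i
    rcases Bool.eq_false_or_eq_true (s i) with hsi | hsi <;>
      rcases Bool.eq_false_or_eq_true (s (i + 1)) with hsi1 | hsi1 <;>
        simp [fukuiIshibashiCyc, hlands, hleaves, fiWitness, hsi, hsi1]
  rw [Finset.sum_congr rfl (fun i _ => key i)]
  have hcard : (Finset.univ.filter leaves).card = (Finset.univ.filter lands).card := by
    apply Finset.card_bij (fun p _ => p + (fiMove m s p : ZMod L))
    · intro p hp
      simp only [Finset.mem_filter, Finset.mem_univ, true_and, hleaves, hlands] at hp ⊢
      obtain ⟨h1, h2⟩ := fiMove_lands hm hp.1 hp.2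
      exact ⟨h1, _, h2⟩
    · intro p hp p' hp' heq
      simp only [Finset.mem_filter, Finset.mem_univ, true_and, hleaves] at hp hp'
      obtain ⟨_, hw⟩ := fiMove_lands hm hp.1 hp.2
      obtain ⟨_, hw'⟩ := fiMove_lands hm hp'.1 hp'.2
      rw [heq] at hw
      have hmm := fiWitness_unique hw hw'
      have hc : ((fiMove m s p : ℕ) : ZMod L) = ((fiMove m s p' : ℕ) : ZMod L) := by
        rw [hmm]
      rw [hc] at heq
      exact add_right_cancel heq
    · intro i hi
      simp only [Finset.mem_filter, Finset.mem_univ, true_and, hlands, hleaves] at hi ⊢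
      obtain ⟨hif, j, hw⟩ := hi
      obtain ⟨h1, h2, h3⟩ := fiMove_eq_of_witness hif hw
      refine ⟨i - (j : ZMod L), ⟨h1, h2⟩, ?_⟩
      rw [h3]; ring
  have hsum : (∑ i : ZMod L, (if lands i then (1 : ℤ) else 0))
      = ∑ i : ZMod L, (if leaves i then (1 : ℤ) else 0) := by
    rw [Finset.sum_boole, Finset.sum_boole, hcard]
  rw [Finset.sum_sub_distrib, Finset.sum_add_distrib, hsum]
  ring
end
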